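/- arXiv:2101.06415 — 9 statements merged into one kernel-verified Lean document; each statement's English description precedes it below -/
import Mathlib

section
/- Let U, V, R be real-valued random variables on a probability space such that R ≥ 0 almost surely, the triple (U, V, R) has the same joint distribution as (V, U, R), and a U² + b V² + R > 0 almost surely, where a ≥ b > 0 are real constants. Then E[U² / (a U² + b V² + R)] ≤ E[V² / (a U² + b V² + R)]. (Core inequality in the proof of Theorem 2.) -/
/-!
Push everything forward to the law `μ` of `(U, V, R)` on `ℝ³`, which is invariant under the
swap `σ (u, v, r) = (v, u, r)`. Writing `D = a u² + b v² + r`, the integrand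
`f = (u² - v²) / D` satisfies `f + f ∘ σ = -(a - b) (u² - v²)² / (D · D ∘ σ) ≤ 0`, while
`∫ f ∘ σ dμ = ∫ f dμ` by invariance; hence `2 ∫ f dμ ≤ 0`.
-/

open MeasureTheory ProbabilityTheory

theorem MeasureTheory.Integrable.div_of_mul_le {α : Type*} [MeasurableSpace α] {μ : Measure α}
    [IsFiniteMeasure μ] {f g : α → ℝ} {c : ℝ} (hc : 0 < c) (hf : AEMeasurable f μ)
    (hg : AEMeasurable g μ) (hf0 : ∀ᵐ x ∂μ, 0 ≤ f x) (hg0 : ∀ᵐ x ∂μ, 0 < g x)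
    (hfg : ∀ᵐ x ∂μ, c * f x ≤ g x) : Integrable (fun x => f x / g x) μ := by
  refine (integrable_const c⁻¹).mono' (hf.div hg).aestronglyMeasurable ?_
  filter_upwards [hf0, hg0, hfg] with x hfx hgx hfgx
  rw [Real.norm_of_nonneg (div_nonneg hfx hgx.le), div_le_iff₀ hgx, ← div_eq_inv_mul,
    le_div_iff₀ hc, mul_comm]
  exact hfgx

theorem MeasureTheory.MeasurePreserving.integral_nonpos_of_add_comp_nonpos {α : Type*}
    [MeasurableSpace α] {μ : Measure α} {σ : α → α} (hσ : MeasurePreserving σ μ μ)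
    {f : α → ℝ} (hf : Integrable f μ) (hfσ : ∀ᵐ x ∂μ, f x + f (σ x) ≤ 0) :
    ∫ x, f x ∂μ ≤ 0 := by
  have hcomp : ∫ x, f (σ x) ∂μ = ∫ x, f x ∂μ := by
    rw [← integral_map hσ.aemeasurable (hσ.map_eq.symm ▸ hf.aestronglyMeasurable), hσ.map_eq]
  have hsum : ∫ x, f x + f (σ x) ∂μ ≤ 0 :=
    integral_nonpos_of_ae (f := fun x => f x + f (σ x)) hfσ
  rw [integral_add (g := fun x => f (σ x)) hf (hσ.integrable_comp_of_integrable hf), hcomp]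
    at hsum
  linarith

theorem sq_div_sub_sq_div_add_swap_nonpos {a b : ℝ} (hb : 0 < b) (hab : b ≤ a) {u v r : ℝ}
    (hr : 0 ≤ r) (hD : 0 < a * u ^ 2 + b * v ^ 2 + r) :
    u ^ 2 / (a * u ^ 2 + b * v ^ 2 + r) - v ^ 2 / (a * u ^ 2 + b * v ^ 2 + r) +
      (v ^ 2 / (a * v ^ 2 + b * u ^ 2 + r) - u ^ 2 / (a * v ^ 2 + b * u ^ 2 + r)) ≤ 0 := by
  have hD' : 0 < a * v ^ 2 + b * u ^ 2 + r := by
    -- `a · (a v² + b u² + r) ≥ b · (a u² + b v² + r)`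
    nlinarith [mul_nonneg (sub_nonneg.2 hab) (sq_nonneg v), mul_nonneg (sub_nonneg.2 hab) hr,
      mul_nonneg hb.le (sq_nonneg u)]
  rw [← sub_div, ← sub_div, div_add_div _ _ hD.ne' hD'.ne', div_nonpos_iff]
  right
  refine ⟨?_, by positivity⟩
  nlinarith [mul_nonneg (sub_nonneg.2 hab) (sq_nonneg (u ^ 2 - v ^ 2))]

theorem integral_sq_div_le_of_measurePreserving_swap {μ : Measure (ℝ × ℝ × ℝ)}
    [IsFiniteMeasure μ] {a b : ℝ} (hb : 0 < b) (hab : b ≤ a)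
    (hσ : MeasurePreserving (fun p : ℝ × ℝ × ℝ => (p.2.1, p.1, p.2.2)) μ μ)
    (hr : ∀ᵐ p ∂μ, 0 ≤ p.2.2) (hD : ∀ᵐ p ∂μ, 0 < a * p.1 ^ 2 + b * p.2.1 ^ 2 + p.2.2) :
    ∫ p, p.1 ^ 2 / (a * p.1 ^ 2 + b * p.2.1 ^ 2 + p.2.2) ∂μ ≤
      ∫ p, p.2.1 ^ 2 / (a * p.1 ^ 2 + b * p.2.1 ^ 2 + p.2.2) ∂μ := by
  have hDm : AEMeasurable (fun p : ℝ × ℝ × ℝ => a * p.1 ^ 2 + b * p.2.1 ^ 2 + p.2.2) μ := by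
    fun_prop
  have hbound : ∀ᵐ p ∂μ, b * p.1 ^ 2 ≤ a * p.1 ^ 2 + b * p.2.1 ^ 2 + p.2.2 ∧
      b * p.2.1 ^ 2 ≤ a * p.1 ^ 2 + b * p.2.1 ^ 2 + p.2.2 := by
    filter_upwards [hr] with p hp
    constructor <;> nlinarith [sq_nonneg p.1, sq_nonneg p.2.1]
  have hu := Integrable.div_of_mul_le hb (by fun_prop) hDm (.of_forall fun p => sq_nonneg p.1)
    hD (hbound.mono fun _ h => h.1)
  have hv := Integrable.div_of_mul_le hb (by fun_prop) hDm (.of_forall fun p => sq_nonneg p.2.1)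
    hD (hbound.mono fun _ h => h.2)
  have hdiff := hσ.integral_nonpos_of_add_comp_nonpos (hu.sub hv) <| by
    filter_upwards [hr, hD] with p hp hDp
    exact sq_div_sub_sq_div_add_swap_nonpos hb hab hp hDp
  simp only [Pi.sub_apply] at hdiff
  rw [integral_sub hu hv] at hdiff
  linarith

/-- Core inequality in the proof of Theorem 2: if `(U, V, R)` has the same
joint distribution as `(V, U, R)`, `R ≥ 0` a.s., `a ≥ b > 0` and
`a U² + b V² + R > 0` a.s., then
`E[U² / (a U² + b V² + R)] ≤ E[V² / (a U² + b V² + R)]`. -/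
theorem pass_core_inequality
    {Ω : Type*} [MeasurableSpace Ω] (P : Measure Ω) [IsProbabilityMeasure P]
    (U V R : Ω → ℝ) (a b : ℝ) (hb : 0 < b) (hab : b ≤ a)
    (hR : ∀ᵐ ω ∂P, 0 ≤ R ω)
    (hswap : IdentDistrib (fun ω => (U ω, V ω, R ω)) (fun ω => (V ω, U ω, R ω)) P P)
    (hpos : ∀ᵐ ω ∂P, 0 < a * U ω ^ 2 + b * V ω ^ 2 + R ω) :
    ∫ ω, U ω ^ 2 / (a * U ω ^ 2 + b * V ω ^ 2 + R ω) ∂P ≤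
      ∫ ω, V ω ^ 2 / (a * U ω ^ 2 + b * V ω ^ 2 + R ω) ∂P := by
  set X : Ω → ℝ × ℝ × ℝ := fun ω => (U ω, V ω, R ω)
  set σ : ℝ × ℝ × ℝ → ℝ × ℝ × ℝ := fun p => (p.2.1, p.1, p.2.2)
  have hX : AEMeasurable X P := hswap.aemeasurable_fst
  have hσ : MeasurePreserving σ (P.map X) (P.map X) := by
    refine ⟨by fun_prop, ?_⟩
    rw [AEMeasurable.map_map_of_aemeasurable (by fun_prop) hX]
    exact hswap.map_eq.symm
  have hlaw := integral_sq_div_le_of_measurePreserving_swap hb hab hσ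
    ((ae_map_iff hX (measurableSet_le measurable_const (by fun_prop))).2 hR)
    ((ae_map_iff hX (measurableSet_lt measurable_const (by fun_prop))).2 hpos)
  rwa [integral_map hX (Measurable.aestronglyMeasurable (by fun_prop)),
    integral_map hX (Measurable.aestronglyMeasurable (by fun_prop))] at hlaw
end

section
/- Let Q ≥ 1, let λ_1, …, λ_Q be strictly positive real numbers, and let U = (U_1, …, U_Q) be an exchangeable random vector such that Σ_{i=1}^Q λ_i U_i² > 0 almost surely. Define κ_j := E[λ_j U_j² / Σ_{i=1}^Q λ_i U_i²] for j = 1, …, Q. Then for all indices j, k with λ_k ≤ λ_j, one has κ_j · λ_k ≤ κ_k · λ_j; equivalently, κ_j / κ_k ≤ λ_j / λ_k. (Theorem 2, finite exchangeable form: the eigenvalues of the pairwise spatial sign covariance decay more slowly than those of the covariance.) -/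
open MeasureTheory ProbabilityTheory

/-- Theorem 2, finite exchangeable form. If `U` is an exchangeable random
vector, `λ i > 0`, and `∑ i, λ i * U i ^ 2 > 0` a.s., then with
`κ j = E[λ j U j² / ∑ i λ i U i²]`, for all `j k` with `λ k ≤ λ j` one has
`κ j * λ k ≤ κ k * λ j`, i.e. `κ j / κ k ≤ λ j / λ k`. -/
theorem pass_eigenratio_decay
    {Ω : Type*} [MeasurableSpace Ω] (P : Measure Ω) [IsProbabilityMeasure P]
    (Q : ℕ) (hQ : 1 ≤ Q) (lam : Fin Q → ℝ) (hlam : ∀ i, 0 < lam i)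
    (U : Ω → Fin Q → ℝ)
    (hexch : ∀ σ : Equiv.Perm (Fin Q),
      IdentDistrib (fun ω => U ω ∘ σ) U P P)
    (hpos : ∀ᵐ ω ∂P, 0 < ∑ i, lam i * U ω i ^ 2)
    (κ : Fin Q → ℝ)
    (hκ : ∀ j, κ j = ∫ ω, lam j * U ω j ^ 2 / ∑ i, lam i * U ω i ^ 2 ∂P) :
    ∀ j k, lam k ≤ lam j → κ j * lam k ≤ κ k * lam j := by
  intro j k hjk
  by_cases hje : j = k
  · subst hje; exact le_refl _
  classical
  set τ : Equiv.Perm (Fin Q) := Equiv.swap j k with hτdef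
  have hτj : τ j = k := Equiv.swap_apply_left j k
  have hτk : τ k = j := Equiv.swap_apply_right j k
  -- measurability of U
  have hU : AEMeasurable U P := by
    have h := (hexch 1).aemeasurable_fst
    simpa [Function.comp] using h
  have hUi : ∀ i, AEMeasurable (fun ω => U ω i) P := fun i =>
    (measurable_pi_apply i).comp_aemeasurable hU
  set S : Ω → ℝ := fun ω => ∑ i, lam i * U ω i ^ 2 with hSdef
  set T : Ω → ℝ := fun ω => ∑ i, lam i * U ω (τ i) ^ 2 with hTdef
  have hSm : AEMeasurable S P := by
    apply Finset.aemeasurable_fun_sum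
    intro i _
    exact aemeasurable_const.mul ((hUi i).pow aemeasurable_const)
  have hTm : AEMeasurable T P := by
    apply Finset.aemeasurable_fun_sum
    intro i _
    exact aemeasurable_const.mul ((hUi (τ i)).pow aemeasurable_const)
  have hSpos : ∀ᵐ ω ∂P, 0 < S ω := hpos
  -- relation between T and S
  have hTS : ∀ ω, T ω = S ω + (lam j - lam k) * (U ω k ^ 2 - U ω j ^ 2) := by
    intro ω
    have h1 : T ω - S ω = ∑ i, (lam i * U ω (τ i) ^ 2 - lam i * U ω i ^ 2) := by
      rw [Finset.sum_sub_distrib]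
    have h2 : ∑ i, (lam i * U ω (τ i) ^ 2 - lam i * U ω i ^ 2)
        = ∑ i ∈ ({j, k} : Finset (Fin Q)), (lam i * U ω (τ i) ^ 2 - lam i * U ω i ^ 2) := by
      refine (Finset.sum_subset (Finset.subset_univ _) ?_).symm
      intro x _ hx
      simp only [Finset.mem_insert, Finset.mem_singleton] at hx
      push_neg at hx
      rw [hτdef, Equiv.swap_apply_of_ne_of_ne hx.1 hx.2]
      ring
    rw [h2, Finset.sum_pair hje, hτj, hτk] at h1
    linarith [h1]
  have hTpos : ∀ᵐ ω ∂P, 0 < T ω := by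
    filter_upwards [hSpos] with ω hω
    obtain ⟨i, hi⟩ : ∃ i, U ω i ≠ 0 := by
      by_contra h
      push_neg at h
      simp only [hSdef, h] at hω
      norm_num at hω
    have h1 : 0 < lam (τ i) * U ω (τ (τ i)) ^ 2 := by
      have he : τ (τ i) = i := Equiv.swap_apply_self j k i
      rw [he]
      have : 0 < U ω i ^ 2 := by positivity
      exact mul_pos (hlam _) this
    have h2 : lam (τ i) * U ω (τ (τ i)) ^ 2 ≤ T ω :=
      Finset.single_le_sum (f := fun m => lam m * U ω (τ m) ^ 2)
        (fun m _ => mul_nonneg (hlam m).le (by positivity)) (Finset.mem_univ (τ i))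
    linarith
  -- single-term bounds
  have hbS : ∀ ω, ∀ i, 0 < S ω → U ω i ^ 2 / S ω ≤ 1 / lam i := by
    intro ω i hω
    rw [div_le_div_iff₀ hω (hlam i)]
    have h2 : lam i * U ω i ^ 2 ≤ S ω := Finset.single_le_sum (f := fun m => lam m * U ω m ^ 2)
      (fun m _ => mul_nonneg (hlam m).le (by positivity)) (Finset.mem_univ i)
    nlinarith [h2]
  have hbT : ∀ ω, ∀ i, 0 < T ω → U ω (τ i) ^ 2 / T ω ≤ 1 / lam i := by
    intro ω i hω
    rw [div_le_div_iff₀ hω (hlam i)]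
    have h2 : lam i * U ω (τ i) ^ 2 ≤ T ω :=
      Finset.single_le_sum (f := fun m => lam m * U ω (τ m) ^ 2)
        (fun m _ => mul_nonneg (hlam m).le (by positivity)) (Finset.mem_univ i)
    nlinarith [h2]
  -- integrability helper
  have mkInt : ∀ (g : Ω → ℝ) (C : ℝ), AEMeasurable g P → (∀ᵐ ω ∂P, |g ω| ≤ C)
      → Integrable g P := by
    intro g C hg hbd
    refine Integrable.mono' (integrable_const C) hg.aestronglyMeasurable ?_
    filter_upwards [hbd] with ω h
    simpa [Real.norm_eq_abs] using h
  -- the integrands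
  set g1 : Ω → ℝ := fun ω => U ω j ^ 2 / S ω with hg1
  set g2 : Ω → ℝ := fun ω => U ω k ^ 2 / S ω with hg2
  set g3 : Ω → ℝ := fun ω => (U ω k ^ 2 - U ω j ^ 2) / S ω with hg3
  set g4 : Ω → ℝ := fun ω => (U ω j ^ 2 - U ω k ^ 2) / T ω with hg4
  set g5 : Ω → ℝ := fun ω => (lam j - lam k) * (U ω k ^ 2 - U ω j ^ 2) ^ 2 / (S ω * T ω)
    with hg5
  have hg1m : AEMeasurable g1 P := ((hUi j).pow aemeasurable_const).div hSm
  have hg2m : AEMeasurable g2 P := ((hUi k).pow aemeasurable_const).div hSm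
  have hg3m : AEMeasurable g3 P :=
    (((hUi k).pow aemeasurable_const).sub ((hUi j).pow aemeasurable_const)).div hSm
  have hg4m : AEMeasurable g4 P :=
    (((hUi j).pow aemeasurable_const).sub ((hUi k).pow aemeasurable_const)).div hTm
  have hg1i : Integrable g1 P := by
    refine mkInt g1 (1 / lam j) hg1m ?_
    filter_upwards [hSpos] with ω hω
    rw [abs_of_nonneg (by positivity)]
    exact hbS ω j hω
  have hg2i : Integrable g2 P := by
    refine mkInt g2 (1 / lam k) hg2m ?_
    filter_upwards [hSpos] with ω hω
    rw [abs_of_nonneg (by positivity)]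
    exact hbS ω k hω
  have habs : ∀ x y : ℝ, |x ^ 2 - y ^ 2| ≤ x ^ 2 + y ^ 2 := by
    intro x y
    calc |x ^ 2 - y ^ 2| ≤ |x ^ 2| + |y ^ 2| := abs_sub _ _
      _ = x ^ 2 + y ^ 2 := by
        rw [abs_of_nonneg (by positivity), abs_of_nonneg (by positivity)]
  have hg3i : Integrable g3 P := by
    refine mkInt g3 (1 / lam k + 1 / lam j) hg3m ?_
    filter_upwards [hSpos] with ω hω
    rw [abs_div, abs_of_pos hω]
    calc |U ω k ^ 2 - U ω j ^ 2| / S ω ≤ (U ω k ^ 2 + U ω j ^ 2) / S ω :=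
          (div_le_div_iff_of_pos_right hω).mpr (habs _ _)
      _ = U ω k ^ 2 / S ω + U ω j ^ 2 / S ω := add_div _ _ _
      _ ≤ 1 / lam k + 1 / lam j := add_le_add (hbS ω k hω) (hbS ω j hω)
  have hg4i : Integrable g4 P := by
    refine mkInt g4 (1 / lam k + 1 / lam j) hg4m ?_
    filter_upwards [hTpos] with ω hω
    rw [abs_div, abs_of_pos hω]
    have e1 : U ω j ^ 2 = U ω (τ k) ^ 2 := by rw [hτk]
    have e2 : U ω k ^ 2 = U ω (τ j) ^ 2 := by rw [hτj]
    calc |U ω j ^ 2 - U ω k ^ 2| / T ω ≤ (U ω j ^ 2 + U ω k ^ 2) / T ω :=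
          (div_le_div_iff_of_pos_right hω).mpr (habs _ _)
      _ = U ω (τ k) ^ 2 / T ω + U ω (τ j) ^ 2 / T ω := by rw [e1, e2, add_div]
      _ ≤ 1 / lam k + 1 / lam j := add_le_add (hbT ω k hω) (hbT ω j hω)
  -- g5 = g3 + g4 a.e.
  have hg5eq : ∀ᵐ ω ∂P, g5 ω = g3 ω + g4 ω := by
    filter_upwards [hSpos, hTpos] with ω hS0 hT0
    have hT' := hTS ω
    simp only [hg3, hg4, hg5]
    rw [hT']
    have hne : S ω + (lam j - lam k) * (U ω k ^ 2 - U ω j ^ 2) ≠ 0 := by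
      rw [← hT']; exact hT0.ne'
    field_simp
    ring
  have hg5i : Integrable g5 P := (hg3i.add hg4i).congr (hg5eq.mono fun ω h => h.symm)
  have hg5nn : 0 ≤ ∫ ω, g5 ω ∂P := by
    apply integral_nonneg_of_ae
    filter_upwards [hSpos, hTpos] with ω hS0 hT0
    have h1 : 0 ≤ lam j - lam k := by linarith
    positivity
  -- exchangeability : ∫ g4 = ∫ g3
  have hfm : Measurable (fun x : Fin Q → ℝ =>
      (x k ^ 2 - x j ^ 2) / ∑ i, lam i * x i ^ 2) := by
    apply Measurable.div
    · exact ((measurable_pi_apply k).pow measurable_const).sub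
        ((measurable_pi_apply j).pow measurable_const)
    · exact Finset.measurable_sum _ fun i _ =>
        measurable_const.mul ((measurable_pi_apply i).pow measurable_const)
  have hID := ((hexch τ).comp hfm).integral_eq
  have hcomp1 : (fun ω => ((U ω ∘ τ) k ^ 2 - (U ω ∘ τ) j ^ 2) / ∑ i, lam i * (U ω ∘ τ) i ^ 2)
      = g4 := by
    funext ω
    simp only [Function.comp, hτj, hτk, hg4, hTdef]
  have hcomp2 : (fun ω => (U ω k ^ 2 - U ω j ^ 2) / ∑ i, lam i * U ω i ^ 2) = g3 := by
    funext ω; rfl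
  have hI43 : ∫ ω, g4 ω ∂P = ∫ ω, g3 ω ∂P := by
    have := hID
    simp only [Function.comp] at this
    rw [← hcomp1, ← hcomp2]
    exact this
  -- conclude ∫ g3 ≥ 0
  have hI5 : ∫ ω, g5 ω ∂P = ∫ ω, g3 ω ∂P + ∫ ω, g4 ω ∂P := by
    rw [← integral_add hg3i hg4i]
    exact integral_congr_ae hg5eq
  have hI3nn : 0 ≤ ∫ ω, g3 ω ∂P := by
    rw [hI5, hI43] at hg5nn
    linarith
  -- ∫ g1 ≤ ∫ g2
  have hI12 : ∫ ω, g1 ω ∂P ≤ ∫ ω, g2 ω ∂P := by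
    have h := integral_sub hg2i hg1i
    have he : (fun ω => g2 ω - g1 ω) = g3 := by
      funext ω
      simp only [hg1, hg2, hg3]
      rw [sub_div]
    rw [he] at h
    linarith [hI3nn, h.symm]
  -- rewrite κ
  have hκj : κ j = lam j * ∫ ω, g1 ω ∂P := by
    rw [hκ j, ← integral_const_mul]
    congr 1
    funext ω
    rw [hg1, mul_div_assoc]
  have hκk : κ k = lam k * ∫ ω, g2 ω ∂P := by
    rw [hκ k, ← integral_const_mul]
    congr 1
    funext ω
    rw [hg2, mul_div_assoc]
  rw [hκj, hκk]
  have hpos' : 0 < lam j * lam k := mul_pos (hlam j) (hlam k)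
  nlinarith [hI12, hpos']
end

section
/- Let Q ≥ 1, let λ_1, …, λ_Q be strictly positive real numbers, and let U = (U_1, …, U_Q) be an exchangeable random vector such that Σ_{i=1}^Q λ_i U_i² > 0 almost surely. Define κ_j := E[λ_j U_j² / Σ_{i=1}^Q λ_i U_i²]. Then λ_j ≤ λ_k implies κ_j ≤ κ_k. (Order-preservation claim of Theorem 1: the eigenvalues of the PASS covariance are ordered consistently with the eigenvalues of the covariance.) -/
open MeasureTheory ProbabilityTheory

private lemma pass_pointwise_key {lj lk a b R : ℝ} (hj : 0 < lj) (hk : 0 < lk)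
    (hjk : lj ≤ lk) (ha : 0 ≤ a) (hb : 0 ≤ b) (hR : 0 ≤ R)
    (hS : 0 < lj * a + lk * b + R) (hS' : 0 < lj * b + lk * a + R) :
    0 ≤ (lk * b - lj * a) / (lj * a + lk * b + R) +
        (lk * a - lj * b) / (lj * b + lk * a + R) := by
  rw [div_add_div _ _ (ne_of_gt hS) (ne_of_gt hS')]
  apply div_nonneg _ (by positivity)
  nlinarith [mul_nonneg (mul_nonneg hR (sub_nonneg.2 hjk)) (add_nonneg ha hb),
    mul_nonneg (mul_nonneg (mul_nonneg ha hb) (sub_nonneg.2 hjk))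
      (by linarith : (0:ℝ) ≤ lj + lk)]

/-- order-preservation claim of Theorem 1. If `U` is an exchangeable random
vector, `λ i > 0`, and `∑ i, λ i * U i ^ 2 > 0` a.s., then with
`κ j = E[λ j U j² / ∑ i λ i U i²]`, `λ j ≤ λ k` implies `κ j ≤ κ k`. -/
theorem pass_eigenvalue_order_preservation
    {Ω : Type*} [MeasurableSpace Ω] (P : Measure Ω) [IsProbabilityMeasure P]
    (Q : ℕ) (hQ : 1 ≤ Q) (lam : Fin Q → ℝ) (hlam : ∀ i, 0 < lam i)
    (U : Ω → Fin Q → ℝ)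
    (hexch : ∀ σ : Equiv.Perm (Fin Q),
      IdentDistrib (fun ω => U ω ∘ σ) U P P)
    (hpos : ∀ᵐ ω ∂P, 0 < ∑ i, lam i * U ω i ^ 2)
    (κ : Fin Q → ℝ)
    (hκ : ∀ j, κ j = ∫ ω, lam j * U ω j ^ 2 / ∑ i, lam i * U ω i ^ 2 ∂P) :
    ∀ j k, lam j ≤ lam k → κ j ≤ κ k := by
  intro j k hjk
  rcases eq_or_ne j k with rfl | hne
  · exact le_of_eq rfl
  set τ : Equiv.Perm (Fin Q) := Equiv.swap j k with hτ
  have hU : AEMeasurable U P := (hexch 1).aemeasurable_snd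
  have hUτ : AEMeasurable (fun ω => U ω ∘ τ) P := (hexch τ).aemeasurable_fst
  -- the sum functional
  have hSf_meas : Measurable (fun u : Fin Q → ℝ => ∑ i, lam i * u i ^ 2) := by
    apply Finset.measurable_sum
    intro i _
    exact measurable_const.mul ((measurable_pi_apply i).pow measurable_const)
  have hSf_nonneg : ∀ u : Fin Q → ℝ, 0 ≤ ∑ i, lam i * u i ^ 2 := fun u =>
    Finset.sum_nonneg fun i _ => mul_nonneg (hlam i).le (sq_nonneg _)
  have hterm_le : ∀ (u : Fin Q → ℝ) (i : Fin Q), lam i * u i ^ 2 ≤ ∑ m, lam m * u m ^ 2 :=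
    fun u i => Finset.single_le_sum (fun m _ => mul_nonneg (hlam m).le (sq_nonneg _)) (Finset.mem_univ i)
  -- splitting the sum
  have hkmem : k ∈ Finset.univ.erase j := Finset.mem_erase.2 ⟨hne.symm, Finset.mem_univ k⟩
  have hsplit : ∀ u : Fin Q → ℝ, ∑ i, lam i * u i ^ 2 =
      lam j * u j ^ 2 + lam k * u k ^ 2 +
        ∑ i ∈ (Finset.univ.erase j).erase k, lam i * u i ^ 2 := by
    intro u
    rw [← Finset.add_sum_erase _ _ (Finset.mem_univ j), ← Finset.add_sum_erase _ _ hkmem]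
    ring
  have htauj : ∀ u : Fin Q → ℝ, (u ∘ τ) j = u k := fun u => by simp [hτ]
  have htauk : ∀ u : Fin Q → ℝ, (u ∘ τ) k = u j := fun u => by simp [hτ]
  have hsplitτ : ∀ u : Fin Q → ℝ, ∑ i, lam i * (u ∘ τ) i ^ 2 =
      lam j * u k ^ 2 + lam k * u j ^ 2 +
        ∑ i ∈ (Finset.univ.erase j).erase k, lam i * u i ^ 2 := by
    intro u
    rw [hsplit (u ∘ τ), htauj u, htauk u]
    congr 1
    apply Finset.sum_congr rfl
    intro i hi
    simp only [Finset.mem_erase] at hi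
    have : τ i = i := Equiv.swap_apply_of_ne_of_ne hi.2.1 hi.1
    simp [Function.comp, this]
  -- a.e. positivity of the permuted sum
  have hposτ : ∀ᵐ ω ∂P, 0 < ∑ i, lam i * (U ω ∘ τ) i ^ 2 := by
    have hid : IdentDistrib (fun ω => ∑ i, lam i * (U ω ∘ τ) i ^ 2)
        (fun ω => ∑ i, lam i * U ω i ^ 2) P P := (hexch τ).comp hSf_meas
    rw [ae_iff] at hpos ⊢
    have h1 : P.map (fun ω => ∑ i, lam i * (U ω ∘ τ) i ^ 2) (Set.Iic 0)
        = P.map (fun ω => ∑ i, lam i * U ω i ^ 2) (Set.Iic 0) := by rw [hid.map_eq]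
    rw [Measure.map_apply_of_aemeasurable hid.aemeasurable_fst measurableSet_Iic,
        Measure.map_apply_of_aemeasurable hid.aemeasurable_snd measurableSet_Iic] at h1
    have e1 : {a | ¬ 0 < ∑ i, lam i * (U a ∘ τ) i ^ 2}
        = (fun ω => ∑ i, lam i * (U ω ∘ τ) i ^ 2) ⁻¹' Set.Iic 0 := by
      ext ω; simp [not_lt]
    have e2 : {a | ¬ 0 < ∑ i, lam i * U a i ^ 2}
        = (fun ω => ∑ i, lam i * U ω i ^ 2) ⁻¹' Set.Iic 0 := by
      ext ω; simp [not_lt]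
    rw [e1, h1, ← e2, hpos]
  -- the function g
  set g : (Fin Q → ℝ) → ℝ :=
    fun u => (lam k * u k ^ 2 - lam j * u j ^ 2) / ∑ i, lam i * u i ^ 2 with hg
  have hg_meas : Measurable g := by
    apply Measurable.div _ hSf_meas
    exact (measurable_const.mul ((measurable_pi_apply k).pow measurable_const)).sub
      (measurable_const.mul ((measurable_pi_apply j).pow measurable_const))
  -- universal bounds
  have hg_bd : ∀ u : Fin Q → ℝ, |g u| ≤ 1 := by
    intro u
    rcases (hSf_nonneg u).eq_or_lt with h | h
    · simp [hg, ← h]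
    · rw [hg, abs_div, abs_of_pos h, div_le_one h]
      have h1 := hterm_le u j
      have h2 := hterm_le u k
      have h3 : 0 ≤ lam j * u j ^ 2 := mul_nonneg (hlam j).le (sq_nonneg _)
      have h4 : 0 ≤ lam k * u k ^ 2 := mul_nonneg (hlam k).le (sq_nonneg _)
      have h5 := hsplit u
      have h6 : 0 ≤ ∑ i ∈ (Finset.univ.erase j).erase k, lam i * u i ^ 2 :=
        Finset.sum_nonneg fun i _ => mul_nonneg (hlam i).le (sq_nonneg _)
      rw [abs_sub_le_iff]
      constructor <;> linarith
  have hf_bd : ∀ (m : Fin Q) (u : Fin Q → ℝ), |lam m * u m ^ 2 / ∑ i, lam i * u i ^ 2| ≤ 1 := by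
    intro m u
    rcases (hSf_nonneg u).eq_or_lt with h | h
    · simp [← h]
    · rw [abs_div, abs_of_pos h, div_le_one h, abs_of_nonneg (mul_nonneg (hlam m).le (sq_nonneg _))]
      exact hterm_le u m
  -- integrability helper
  have int_of : ∀ (V : Ω → ℝ), AEMeasurable V P → (∀ ω, |V ω| ≤ 1) → Integrable V P := by
    intro V hV hb
    exact (integrable_const (1:ℝ)).mono' hV.aestronglyMeasurable
      (Filter.Eventually.of_forall hb)
  have hIg : Integrable (fun ω => g (U ω)) P :=
    int_of _ (hg_meas.comp_aemeasurable hU) (fun ω => hg_bd (U ω))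
  have hIgτ : Integrable (fun ω => g (U ω ∘ τ)) P :=
    int_of _ (hg_meas.comp_aemeasurable hUτ) (fun ω => hg_bd (U ω ∘ τ))
  have hIfj : Integrable (fun ω => lam j * U ω j ^ 2 / ∑ i, lam i * U ω i ^ 2) P := by
    refine int_of _ ?_ (fun ω => hf_bd j (U ω))
    exact ((measurable_const.mul ((measurable_pi_apply j).pow measurable_const)).div
      hSf_meas).comp_aemeasurable hU
  have hIfk : Integrable (fun ω => lam k * U ω k ^ 2 / ∑ i, lam i * U ω i ^ 2) P := by
    refine int_of _ ?_ (fun ω => hf_bd k (U ω))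
    exact ((measurable_const.mul ((measurable_pi_apply k).pow measurable_const)).div
      hSf_meas).comp_aemeasurable hU
  -- a.e. pointwise nonnegativity of the symmetrized integrand
  have hae : ∀ᵐ ω ∂P, 0 ≤ g (U ω) + g (U ω ∘ τ) := by
    filter_upwards [hpos, hposτ] with ω h1 h2
    have hs := hsplit (U ω)
    have hsτ := hsplitτ (U ω)
    rw [hg]
    simp only
    rw [hs, htauj (U ω), htauk (U ω), hsτ]
    have ha : (0:ℝ) ≤ U ω j ^ 2 := sq_nonneg _
    have hb : (0:ℝ) ≤ U ω k ^ 2 := sq_nonneg _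
    have hR : 0 ≤ ∑ i ∈ (Finset.univ.erase j).erase k, lam i * U ω i ^ 2 :=
      Finset.sum_nonneg fun i _ => mul_nonneg (hlam i).le (sq_nonneg _)
    have h1' : 0 < lam j * U ω j ^ 2 + lam k * U ω k ^ 2 +
        ∑ i ∈ (Finset.univ.erase j).erase k, lam i * U ω i ^ 2 := by rw [← hs]; exact h1
    have h2' : 0 < lam j * U ω k ^ 2 + lam k * U ω j ^ 2 +
        ∑ i ∈ (Finset.univ.erase j).erase k, lam i * U ω i ^ 2 := by rw [← hsτ]; exact h2
    exact pass_pointwise_key (hlam j) (hlam k) hjk ha hb hR h1' h2'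
  have hsum : 0 ≤ ∫ ω, (g (U ω) + g (U ω ∘ τ)) ∂P := integral_nonneg_of_ae hae
  rw [integral_add hIg hIgτ] at hsum
  have heq : ∫ ω, g (U ω ∘ τ) ∂P = ∫ ω, g (U ω) ∂P := by
    have := ((hexch τ).comp hg_meas).integral_eq
    simpa [Function.comp] using this
  have hκdiff : κ k - κ j = ∫ ω, g (U ω) ∂P := by
    rw [hκ j, hκ k, ← integral_sub hIfk hIfj]
    congr 1
    funext ω
    rw [hg, div_sub_div_same]
  linarith
end

section
/- Let X be a random vector in ℝ^d, let X̃ be an independent copy of X, and set D := X − X̃; assume ‖D‖ > 0 almost surely. Let (φ_1, …, φ_d) be an orthonormal basis of ℝ^d such that the score vector (⟨D, φ_1⟩, …, ⟨D, φ_d⟩) is sign-flip invariant. Define the pairwise spatial sign covariance matrix K := E[D Dᵀ / ‖D‖²]. Then K = Σ_{j=1}^d κ_j φ_j φ_jᵀ, where κ_j := E[⟨D, φ_j⟩² / ‖D‖²]; in particular K φ_j = κ_j φ_j for every j (so K and any matrix diagonalized by (φ_j) share the eigenvectors φ_j), and Σ_{j=1}^d κ_j = 1. (Theorem 1, finite-dimensional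 form.) -/
open MeasureTheory ProbabilityTheory

/-- A random vector `Z` in `ℝ^n` is sign-flip invariant (coordinatewise symmetric) if for
every vector of signs `ε ∈ {−1, 1}^n`, `(ε 1 Z 1, …, ε n Z n)` has the same distribution
as `Z`. -/
def SignFlipInvariant {Ω : Type*} [MeasurableSpace Ω] (P : Measure Ω) {n : ℕ}
    (Z : Ω → Fin n → ℝ) : Prop :=
  ∀ ε : Fin n → ℝ, (∀ i, ε i = 1 ∨ ε i = -1) →
    IdentDistrib (fun ω i => ε i * Z ω i) Z P P

/-- Theorem 1, finite-dimensional form. Let `X̃` be an independent copy of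
`X`, `D := X − X̃` with `‖D‖ > 0` a.s., and let `(φ j)` be an orthonormal basis of `ℝ^d`
whose score vector `(⟨D, φ 1⟩, …, ⟨D, φ d⟩)` is sign-flip invariant. Then the pairwise
spatial sign covariance matrix `K := E[D Dᵀ / ‖D‖²]` satisfies
`K = ∑ j, κ j • φ j φ jᵀ` with `κ j := E[⟨D, φ j⟩² / ‖D‖²]`; in particular
`K φ j = κ j φ j` for every `j`, and `∑ j, κ j = 1`. -/
theorem pass_covariance_eigendecomposition
    {Ω : Type*} [MeasurableSpace Ω] (P : Measure Ω) [IsProbabilityMeasure P]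
    (d : ℕ) (X Xt : Ω → Fin d → ℝ)
    (hindep : IndepFun X Xt P) (hid : IdentDistrib X Xt P P)
    (D : Ω → Fin d → ℝ) (hD : D = fun ω => X ω - Xt ω)
    (hpos : ∀ᵐ ω ∂P, 0 < ∑ i, D ω i ^ 2)
    (φ : Fin d → Fin d → ℝ)
    (hortho : ∀ j k, ∑ i, φ j i * φ k i = if j = k then (1 : ℝ) else 0)
    (hflip : SignFlipInvariant P (fun ω j => ∑ i, D ω i * φ j i))
    (K : Matrix (Fin d) (Fin d) ℝ)
    (hK : ∀ s t, K s t = ∫ ω, D ω s * D ω t / (∑ i, D ω i ^ 2) ∂P)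
    (κ : Fin d → ℝ)
    (hκ : ∀ j, κ j = ∫ ω, (∑ i, D ω i * φ j i) ^ 2 / (∑ i, D ω i ^ 2) ∂P) :
    (∀ s t, K s t = ∑ j, κ j * φ j s * φ j t) ∧
      (∀ j, K.mulVec (φ j) = κ j • φ j) ∧
      (∑ j, κ j = 1) := by
  classical
  set Z : Ω → Fin d → ℝ := fun ω j => ∑ i, D ω i * φ j i with hZ
  -- column orthonormality
  have hcol : ∀ s t : Fin d, ∑ j, φ j s * φ j t = if s = t then (1:ℝ) else 0 := by
    have h1 : (Matrix.of φ) * (Matrix.of φ).transpose = 1 := by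
      ext j k
      simp only [Matrix.mul_apply, Matrix.transpose_apply, Matrix.of_apply, Matrix.one_apply]
      exact hortho j k
    have h2 : (Matrix.of φ).transpose * (Matrix.of φ) = 1 := mul_eq_one_comm.mp h1
    intro s t
    have := congrFun (congrFun h2 s) t
    simpa [Matrix.mul_apply, Matrix.transpose_apply, Matrix.of_apply, Matrix.one_apply,
      mul_comm] using this
  -- expansion of D in the basis
  have hexp : ∀ ω s, (∑ j, Z ω j * φ j s) = D ω s := by
    intro ω s
    calc ∑ j, Z ω j * φ j s = ∑ j, ∑ i, D ω i * (φ j i * φ j s) := by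
          simp only [hZ, Finset.sum_mul, mul_assoc]
      _ = ∑ i, D ω i * ∑ j, φ j i * φ j s := by
          rw [Finset.sum_comm]; simp [Finset.mul_sum]
      _ = D ω s := by simp [hcol]
  -- Parseval
  have hpar : ∀ ω, (∑ j, Z ω j ^ 2) = ∑ i, D ω i ^ 2 := by
    intro ω
    calc ∑ j, Z ω j ^ 2 = ∑ j, Z ω j * ∑ i, φ j i * D ω i := by
          simp only [hZ, pow_two]
          refine Finset.sum_congr rfl fun j _ => ?_
          congr 1
          exact Finset.sum_congr rfl fun i _ => mul_comm _ _
      _ = ∑ i, (∑ j, Z ω j * φ j i) * D ω i := by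
          simp only [Finset.mul_sum, Finset.sum_mul]
          rw [Finset.sum_comm]
          simp [mul_assoc]
      _ = ∑ i, D ω i ^ 2 := by
          refine Finset.sum_congr rfl fun i _ => ?_
          rw [hexp, pow_two]
  -- measurability
  have hmD : AEMeasurable D P := by
    rw [hD]; exact hid.aemeasurable_fst.sub hid.aemeasurable_snd
  have hmDi : ∀ i, AEMeasurable (fun ω => D ω i) P := fun i =>
    (measurable_pi_apply i).comp_aemeasurable hmD
  have hmZ : AEMeasurable Z P := by
    rw [hZ]
    have hmeas : Measurable (fun v : Fin d → ℝ => fun j => ∑ i, v i * φ j i) := by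
      refine measurable_pi_lambda _ fun j => ?_
      exact Finset.measurable_sum _ fun i _ => (measurable_pi_apply i).mul_const _
    exact hmeas.comp_aemeasurable hmD
  have hmden : AEMeasurable (fun ω => ∑ i, D ω i ^ 2) P :=
    Finset.aemeasurable_fun_sum _ fun i _ => (hmDi i).pow_const 2
  -- integrability of the ratio terms
  have hint : ∀ j k, Integrable (fun ω => Z ω j * Z ω k / ∑ i, D ω i ^ 2) P := by
    intro j k
    have hm : AEMeasurable (fun ω => Z ω j * Z ω k / ∑ i, D ω i ^ 2) P :=
      (((measurable_pi_apply j).comp_aemeasurable hmZ).mul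
        ((measurable_pi_apply k).comp_aemeasurable hmZ)).div hmden
    refine (integrable_const (1:ℝ)).mono' hm.aestronglyMeasurable ?_
    filter_upwards with ω
    have hSnn : (0:ℝ) ≤ ∑ i, D ω i ^ 2 := Finset.sum_nonneg fun i _ => sq_nonneg _
    rcases eq_or_lt_of_le hSnn with h0 | hSpos
    · have hz : Z ω j = 0 := by
        have := (Finset.sum_eq_zero_iff_of_nonneg (fun i _ => sq_nonneg (Z ω i))).mp
          (by rw [hpar]; exact h0.symm) j (Finset.mem_univ j)
        exact pow_eq_zero_iff two_ne_zero |>.mp this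
      simp [hz]
    · have h1 : Z ω j ^ 2 ≤ ∑ i, Z ω i ^ 2 :=
        Finset.single_le_sum (fun i _ => sq_nonneg (Z ω i)) (Finset.mem_univ j)
      have h2 : Z ω k ^ 2 ≤ ∑ i, Z ω i ^ 2 :=
        Finset.single_le_sum (fun i _ => sq_nonneg (Z ω i)) (Finset.mem_univ k)
      rw [hpar] at h1 h2
      rw [Real.norm_eq_abs, abs_div, abs_of_pos hSpos, div_le_one hSpos, abs_mul]
      nlinarith [sq_nonneg (|Z ω j| - |Z ω k|), sq_abs (Z ω j), sq_abs (Z ω k),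
        abs_nonneg (Z ω j), abs_nonneg (Z ω k)]
  -- key integral identity
  have hkey : ∀ j k, (∫ ω, Z ω j * Z ω k / ∑ i, D ω i ^ 2 ∂P)
      = if j = k then κ j else 0 := by
    intro j k
    by_cases hjk : j = k
    · subst hjk
      rw [if_pos rfl, hκ j]
      refine integral_congr_ae (Filter.Eventually.of_forall fun ω => ?_)
      simp [hZ, pow_two]
    · rw [if_neg hjk]
      set ε : Fin d → ℝ := fun i => if i = j then -1 else 1 with hε
      have hεval : ∀ i, ε i = 1 ∨ ε i = -1 := by
        intro i; by_cases h : i = j <;> simp [hε, h]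
      have hid2 := hflip ε hεval
      have hg : Measurable (fun z : Fin d → ℝ => z j * z k / ∑ i, z i ^ 2) := by
        fun_prop
      have hcomp := (hid2.comp hg).integral_eq
      have hεsq : ∀ i, ε i ^ 2 = 1 := by
        intro i; rcases hεval i with h | h <;> rw [h] <;> norm_num
      have hflipval : ∀ ω, ((fun z : Fin d → ℝ => z j * z k / ∑ i, z i ^ 2)
            ∘ (fun ω i => ε i * Z ω i)) ω
          = -(Z ω j * Z ω k / ∑ i, Z ω i ^ 2) := by
        intro ω
        have hj : ε j = -1 := by simp [hε]
        have hk : ε k = 1 := by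
          simp only [hε]
          rw [if_neg (Ne.symm hjk)]
        have hden : (∑ i, (ε i * Z ω i) ^ 2) = ∑ i, Z ω i ^ 2 := by
          refine Finset.sum_congr rfl fun i _ => ?_
          rw [mul_pow, hεsq i, one_mul]
        simp only [Function.comp_apply]
        rw [hden, hj, hk]
        ring
      have hZval : ∀ ω, ((fun z : Fin d → ℝ => z j * z k / ∑ i, z i ^ 2) ∘ Z) ω
          = Z ω j * Z ω k / ∑ i, D ω i ^ 2 := by
        intro ω
        simp only [Function.comp_apply]
        rw [hpar ω]
      have heq : (∫ ω, Z ω j * Z ω k / ∑ i, D ω i ^ 2 ∂P)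
          = -(∫ ω, Z ω j * Z ω k / ∑ i, D ω i ^ 2 ∂P) := by
        calc (∫ ω, Z ω j * Z ω k / ∑ i, D ω i ^ 2 ∂P)
            = ∫ ω, ((fun z : Fin d → ℝ => z j * z k / ∑ i, z i ^ 2) ∘ Z) ω ∂P := by
              refine integral_congr_ae (Filter.Eventually.of_forall fun ω => ?_)
              rw [hZval]
          _ = ∫ ω, ((fun z : Fin d → ℝ => z j * z k / ∑ i, z i ^ 2)
                ∘ (fun ω i => ε i * Z ω i)) ω ∂P := hcomp.symm
          _ = ∫ ω, -(Z ω j * Z ω k / ∑ i, Z ω i ^ 2) ∂P := by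
              refine integral_congr_ae (Filter.Eventually.of_forall fun ω => ?_)
              rw [hflipval]
          _ = -(∫ ω, Z ω j * Z ω k / ∑ i, Z ω i ^ 2 ∂P) := integral_neg _
          _ = -(∫ ω, Z ω j * Z ω k / ∑ i, D ω i ^ 2 ∂P) := by
              congr 1
              refine integral_congr_ae (Filter.Eventually.of_forall fun ω => ?_)
              simp only [hpar]
      linarith
  -- Part 1
  have part1 : ∀ s t, K s t = ∑ j, κ j * φ j s * φ j t := by
    intro s t
    rw [hK]
    have hintg : ∀ ω, D ω s * D ω t / (∑ i, D ω i ^ 2)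
        = ∑ j, ∑ k, (φ j s * φ k t) * (Z ω j * Z ω k / ∑ i, D ω i ^ 2) := by
      intro ω
      rw [← hexp ω s, ← hexp ω t, Finset.sum_mul_sum, Finset.sum_div]
      refine Finset.sum_congr rfl fun j _ => ?_
      rw [Finset.sum_div]
      refine Finset.sum_congr rfl fun k _ => ?_
      ring
    calc (∫ ω, D ω s * D ω t / ∑ i, D ω i ^ 2 ∂P)
        = ∫ ω, ∑ j, ∑ k, (φ j s * φ k t) * (Z ω j * Z ω k / ∑ i, D ω i ^ 2) ∂P := by
          exact integral_congr_ae (Filter.Eventually.of_forall hintg)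
      _ = ∑ j, ∑ k, (φ j s * φ k t) * (∫ ω, Z ω j * Z ω k / ∑ i, D ω i ^ 2 ∂P) := by
          rw [integral_finset_sum _ fun j _ =>
            integrable_finset_sum _ fun k _ => (hint j k).const_mul _]
          refine Finset.sum_congr rfl fun j _ => ?_
          rw [integral_finset_sum _ fun k _ => (hint j k).const_mul _]
          refine Finset.sum_congr rfl fun k _ => ?_
          rw [integral_const_mul]
      _ = ∑ j, κ j * φ j s * φ j t := by
          refine Finset.sum_congr rfl fun j _ => ?_
          rw [Finset.sum_congr rfl fun k _ => by rw [hkey j k]]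
          simp only [mul_ite, mul_zero]
          rw [Finset.sum_ite_eq _ j (fun k => φ j s * φ k t * κ j)]
          simp [mul_comm, mul_assoc, mul_left_comm]
  refine ⟨part1, ?_, ?_⟩
  · -- Part 2
    intro j
    funext s
    simp only [Matrix.mulVec, dotProduct, Pi.smul_apply, smul_eq_mul]
    calc ∑ t, K s t * φ j t = ∑ t, (∑ k, κ k * φ k s * φ k t) * φ j t := by
          refine Finset.sum_congr rfl fun t _ => ?_
          rw [part1]
      _ = ∑ k, (κ k * φ k s) * ∑ t, φ k t * φ j t := by
          simp only [Finset.sum_mul, Finset.mul_sum]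
          rw [Finset.sum_comm]
          refine Finset.sum_congr rfl fun k _ => Finset.sum_congr rfl fun t _ => by ring
      _ = κ j * φ j s := by
          simp only [hortho]
          simp
  · -- Part 3
    have h1 : ∑ j, κ j = ∫ ω, ∑ j, Z ω j * Z ω j / (∑ i, D ω i ^ 2) ∂P := by
      rw [integral_finset_sum _ fun j _ => hint j j]
      refine Finset.sum_congr rfl fun j _ => ?_
      simpa using (hkey j j).symm
    rw [h1]
    have h2 : ∀ᵐ ω ∂P, (∑ j, Z ω j * Z ω j / (∑ i, D ω i ^ 2)) = 1 := by
      filter_upwards [hpos] with ω hω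
      rw [← Finset.sum_div]
      have : (∑ j, Z ω j * Z ω j) = ∑ i, D ω i ^ 2 := by
        rw [← hpar ω]
        exact Finset.sum_congr rfl fun j _ => (pow_two _).symm
      rw [this, div_self (ne_of_gt hω)]
    rw [integral_congr_ae h2]
    simp
end

section
/- Let X be a random vector in ℝ^d such that X has the same distribution as μ + Ω Z, where μ ∈ ℝ^d, Ω ∈ ℝ^{d×d} is an orthogonal matrix, and Z is a sign-flip invariant random vector in ℝ^d. Let X̃ be an independent copy of X, and let Z̃ be an independent copy of Z. Then X − X̃ has the same distribution as Ω (Z − Z̃), and Z − Z̃ is sign-flip invariant; in particular, X − X̃ again satisfies Marden's model (with location 0). (Finite-dimensional content of the inclusion FCS ⊂ wFCS in Proposition 2.) -/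
open MeasureTheory ProbabilityTheory Matrix

/-! Independent pairs with identically distributed marginals have the same joint law, so their
differences are identically distributed. Applied to `(X, X̃)` and `(μ + O Z, μ + O Z̃)` this gives
`X − X̃ =_D O (Z − Z̃)`; applied to `(εZ, εZ̃)` and `(Z, Z̃)` it shows that `Z − Z̃` is sign-flip
invariant, since a sign flip commutes with subtraction. -/

lemma ProbabilityTheory.IdentDistrib.sub_of_indepFun {Ω Ω' E : Type*} [MeasurableSpace Ω]
    [MeasurableSpace Ω'] [MeasurableSpace E] [Sub E] [MeasurableSub₂ E]
    {μ : Measure Ω} {ν : Measure Ω'} [IsFiniteMeasure μ] {X Y : Ω → E} {Z W : Ω' → E}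
    (hXZ : IdentDistrib X Z μ ν) (hYW : IdentDistrib Y W μ ν)
    (hXY : X ⟂ᵢ[μ] Y) (hZW : Z ⟂ᵢ[ν] W) :
    IdentDistrib (fun ω => X ω - Y ω) (fun ω => Z ω - W ω) μ ν :=
  (hXZ.prodMk hYW hXY hZW).comp measurable_sub

namespace SignFlipInvariant

variable {Ω : Type*} [MeasurableSpace Ω] {P : Measure Ω} {n : ℕ} {Z Z' : Ω → Fin n → ℝ}

lemma measurable_signFlip (ε : Fin n → ℝ) : Measurable fun (v : Fin n → ℝ) i => ε i * v i := by
  fun_prop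

lemma of_identDistrib (hZ : SignFlipInvariant P Z) (h : IdentDistrib Z Z' P P) :
    SignFlipInvariant P Z' := fun ε hε =>
  ((h.symm.comp (measurable_signFlip ε)).trans (hZ ε hε)).trans h

lemma sub [IsFiniteMeasure P] (hZ : SignFlipInvariant P Z) (hZ' : SignFlipInvariant P Z')
    (hind : Z ⟂ᵢ[P] Z') : SignFlipInvariant P (fun ω => Z ω - Z' ω) := fun ε hε => by
  have hflip := (hZ ε hε).sub_of_indepFun (hZ' ε hε)
    (hind.comp (measurable_signFlip ε) (measurable_signFlip ε)) hind
  convert hflip using 2 with ω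
  exact funext fun i => mul_sub _ _ _

end SignFlipInvariant

/-- finite-dimensional content of FCS ⊂ wFCS in Proposition 2. If
`X =_D μ + O Z` with `O` orthogonal and `Z` sign-flip invariant, `X̃` an independent copy
of `X` and `Z̃` an independent copy of `Z`, then `X − X̃ =_D O (Z − Z̃)`, the difference
`Z − Z̃` is sign-flip invariant, and in particular `X − X̃` again satisfies Marden's model
with location `0`. -/
theorem marden_model_closed_under_pairwise_difference
    {Ω : Type*} [MeasurableSpace Ω] (P : Measure Ω) [IsProbabilityMeasure P]
    (d : ℕ) (X Xt Z Zt : Ω → Fin d → ℝ) (μ : Fin d → ℝ)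
    (O : Matrix (Fin d) (Fin d) ℝ) (hO : Oᵀ * O = 1)
    (hZ : SignFlipInvariant P Z)
    (hXlaw : IdentDistrib X (fun ω => μ + O.mulVec (Z ω)) P P)
    (hXindep : IndepFun X Xt P) (hXid : IdentDistrib X Xt P P)
    (hZindep : IndepFun Z Zt P) (hZid : IdentDistrib Z Zt P P) :
    IdentDistrib (fun ω => X ω - Xt ω) (fun ω => O.mulVec (Z ω - Zt ω)) P P ∧
      SignFlipInvariant P (fun ω => Z ω - Zt ω) ∧
      (∃ (O' : Matrix (Fin d) (Fin d) ℝ) (W : Ω → Fin d → ℝ),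
        O'ᵀ * O' = 1 ∧ SignFlipInvariant P W ∧
          IdentDistrib (fun ω => X ω - Xt ω)
            (fun ω => (0 : Fin d → ℝ) + O'.mulVec (W ω)) P P) := by
  have hAffine : Measurable fun v : Fin d → ℝ => μ + O *ᵥ v := by fun_prop
  have hXtlaw : IdentDistrib Xt (fun ω => μ + O *ᵥ Zt ω) P P :=
    hXid.symm.trans (hXlaw.trans (hZid.comp hAffine))
  have hdiff : IdentDistrib (fun ω => X ω - Xt ω) (fun ω => O *ᵥ (Z ω - Zt ω)) P P := by
    convert hXlaw.sub_of_indepFun hXtlaw hXindep (hZindep.comp hAffine hAffine) using 2 with ω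
    rw [add_sub_add_left_eq_sub, mulVec_sub]
  have hsym : SignFlipInvariant P (fun ω => Z ω - Zt ω) := hZ.sub (hZ.of_identDistrib hZid) hZindep
  exact ⟨hdiff, hsym, O, _, hO, hsym, by simpa only [zero_add] using hdiff⟩
end

section
/- Let X be a random vector in ℝ^d and μ ∈ ℝ^d. The following are equivalent: (i) X satisfies Marden's model with location μ, i.e., there exist an orthogonal matrix Ω ∈ ℝ^{d×d} and a sign-flip invariant random vector Z in ℝ^d such that X has the same distribution as μ + Ω Z; (ii) for every 1 ≤ p ≤ d and every matrix A ∈ ℝ^{p×d} with orthonormal rows (A Aᵀ = I_p), there exist a matrix M ∈ ℝ^{p×d} with M Mᵀ = I_p and a sign-flip invariant random vector Z' in ℝ^d such that A(X − μ) has the same distribution as M Z'. (Proposition 1: the functional coordinate symmetric class reduces to Marden's model in ℝ^d.) -/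
/-! If `X ~ μ + O Z` with `O` orthogonal, then `A (X - μ) ~ (A O) Z` and `A O` again has
orthonormal rows. Conversely, the case `p = d`, `A = 1` gives `X - μ ~ M Z'` with `M` square,
so `M Mᵀ = 1` makes `M` orthogonal. For `d = 0` the right-hand side is vacuous, but `ℝ⁰` is a
point, so every `X` is in Marden's model. -/

open MeasureTheory ProbabilityTheory Matrix

def MardenModel {Ω : Type*} [MeasurableSpace Ω] (P : Measure Ω) {d : ℕ}
    (X : Ω → Fin d → ℝ) (μ : Fin d → ℝ) : Prop :=
  ∃ (O : Matrix (Fin d) (Fin d) ℝ), Oᵀ * O = 1 ∧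
    ∃ (Ω' : Type) (_ : MeasurableSpace Ω') (P' : Measure Ω') (_ : IsProbabilityMeasure P')
      (Z : Ω' → Fin d → ℝ), SignFlipInvariant P' Z ∧
        IdentDistrib X (fun ω' => μ + O.mulVec (Z ω')) P P'

theorem identDistrib_of_subsingleton {α γ β : Type*} [MeasurableSpace α] [MeasurableSpace γ]
    [MeasurableSpace β] [Subsingleton β] {μ : Measure α} {ν : Measure γ}
    [IsProbabilityMeasure μ] [IsProbabilityMeasure ν] (f : α → β) (g : γ → β) :
    IdentDistrib f g μ ν where
  aemeasurable_fst := aemeasurable_of_subsingleton_codomain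
  aemeasurable_snd := aemeasurable_of_subsingleton_codomain
  map_eq := by
    obtain ⟨a⟩ : Nonempty α := nonempty_of_isProbabilityMeasure μ
    have hf : f = fun _ => f a := funext fun _ => Subsingleton.elim _ _
    have hg : g = fun _ => f a := funext fun _ => Subsingleton.elim _ _
    rw [hf, hg]
    simp [Measure.map_const]

theorem signFlipInvariant_zero {Ω : Type*} [MeasurableSpace Ω] (P : Measure Ω) (n : ℕ) :
    SignFlipInvariant P (fun _ => (0 : Fin n → ℝ)) := by
  intro ε _
  simp only [Pi.zero_apply, mul_zero]
  exact IdentDistrib.refl aemeasurable_const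

section
variable {Ω : Type*} [MeasurableSpace Ω] {P : Measure Ω} {d : ℕ}

theorem MardenModel.exists_identDistrib_mulVec_sub {X : Ω → Fin d → ℝ} {μ : Fin d → ℝ}
    (h : MardenModel P X μ) {p : ℕ} (A : Matrix (Fin p) (Fin d) ℝ) (hA : A * Aᵀ = 1) :
    ∃ M : Matrix (Fin p) (Fin d) ℝ, M * Mᵀ = 1 ∧
      ∃ (Ω' : Type) (_ : MeasurableSpace Ω') (P' : Measure Ω')
        (_ : IsProbabilityMeasure P') (Z' : Ω' → Fin d → ℝ),
          SignFlipInvariant P' Z' ∧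
            IdentDistrib (fun ω => A *ᵥ (X ω - μ)) (fun ω' => M *ᵥ Z' ω') P P' := by
  obtain ⟨O, hO, Ω', _, P', _, Z, hZ, hXZ⟩ := h
  refine ⟨A * O, ?_, Ω', _, P', ‹_›, Z, hZ, ?_⟩
  · rw [transpose_mul, Matrix.mul_assoc, ← Matrix.mul_assoc O, mul_eq_one_comm.mp hO,
      Matrix.one_mul, hA]
  · have hproj : Measurable fun v : Fin d → ℝ => A *ᵥ (v - μ) :=
      (continuous_const.matrix_mulVec (continuous_id.sub continuous_const)).measurable
    simpa only [Function.comp_def, add_sub_cancel_left, mulVec_mulVec] using hXZ.comp hproj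

theorem mardenModel_of_identDistrib_sub {X : Ω → Fin d → ℝ} {μ : Fin d → ℝ}
    {M : Matrix (Fin d) (Fin d) ℝ} (hM : M * Mᵀ = 1) {Ω' : Type} [MeasurableSpace Ω']
    {P' : Measure Ω'} [IsProbabilityMeasure P'] {Z : Ω' → Fin d → ℝ}
    (hZ : SignFlipInvariant P' Z)
    (h : IdentDistrib (fun ω => X ω - μ) (fun ω' => M *ᵥ Z ω') P P') :
    MardenModel P X μ := by
  refine ⟨M, mul_eq_one_comm.mp hM, Ω', _, P', ‹_›, Z, hZ, ?_⟩
  simpa only [Function.comp_def, id, add_sub_cancel] using h.comp (measurable_id.const_add μ)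

theorem mardenModel_fin_zero [IsProbabilityMeasure P] (X : Ω → Fin 0 → ℝ) (μ : Fin 0 → ℝ) :
    MardenModel P X μ :=
  mardenModel_of_identDistrib_sub (M := 1) (by simp) (P' := Measure.dirac ())
    (signFlipInvariant_zero _ 0) (identDistrib_of_subsingleton _ _)

end

/-- Proposition 1: the functional coordinate symmetric class reduces to
Marden's model in `ℝ^d`. `X` satisfies Marden's model with location `μ` if and only if
for every `1 ≤ p ≤ d` and every `A ∈ ℝ^{p×d}` with orthonormal rows (`A Aᵀ = I`), there
are `M ∈ ℝ^{p×d}` with `M Mᵀ = I` and a sign-flip invariant random vector `Z'` in `ℝ^d`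
such that `A (X − μ)` has the same distribution as `M Z'`. -/
theorem marden_iff_coordinate_symmetric
    {Ω : Type*} [MeasurableSpace Ω] (P : Measure Ω) [IsProbabilityMeasure P]
    (d : ℕ) (X : Ω → Fin d → ℝ) (μ : Fin d → ℝ) :
    MardenModel P X μ ↔
      ∀ (p : ℕ), 1 ≤ p → p ≤ d → ∀ A : Matrix (Fin p) (Fin d) ℝ, A * Aᵀ = 1 →
        ∃ M : Matrix (Fin p) (Fin d) ℝ, M * Mᵀ = 1 ∧
          ∃ (Ω' : Type) (_ : MeasurableSpace Ω') (P' : Measure Ω')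
            (_ : IsProbabilityMeasure P') (Z' : Ω' → Fin d → ℝ),
              SignFlipInvariant P' Z' ∧
                IdentDistrib (fun ω => A.mulVec (X ω - μ))
                  (fun ω' => M.mulVec (Z' ω')) P P' := by
  refine ⟨fun h _ _ _ A hA => h.exists_identDistrib_mulVec_sub A hA, fun h => ?_⟩
  rcases Nat.eq_zero_or_pos d with rfl | hd
  · exact mardenModel_fin_zero X μ
  · obtain ⟨M, hM, Ω', _, P', _, Z', hZ', hid⟩ := h d hd le_rfl 1 (by simp)
    exact mardenModel_of_identDistrib_sub hM hZ' (by simpa only [one_mulVec] using hid)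
end

section
/- Let Y be a spherically distributed random vector in ℝ^k, i.e., Q Y has the same distribution as Y for every orthogonal matrix Q ∈ ℝ^{k×k}. Let A ∈ ℝ^{k×d} be any matrix and μ ∈ ℝ^d, and set X := μ + Aᵀ Y. Then there exist an orthogonal matrix Ω ∈ ℝ^{d×d} and a sign-flip invariant random vector Z in ℝ^d such that X has the same distribution as μ + Ω Z; that is, every elliptically distributed random vector in ℝ^d satisfies Marden's model. (Finite-dimensional content of the inclusion FE ⊂ FCS in Proposition 2.) -/
open MeasureTheory ProbabilityTheory Matrix

/-!
Diagonalise `AᵀA = O D Oᵀ` with `O` orthogonal and put `Z := Oᵀ Aᵀ Y`, so that `μ + O Z = X`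
and the rows of `C := Oᵀ Aᵀ` are pairwise orthogonal. Flipping the signs of a set of coordinates
of `Z = C Y` is then the same as reflecting `Y` in the orthogonal complement of the span of the
corresponding rows of `C`, which leaves the law of the spherical vector `Y` unchanged.
-/

theorem IsIdempotentElem.one_sub_two_nsmul_mul_self {R : Type*} [Ring R] {p : R}
    (hp : IsIdempotentElem p) : (1 - 2 • p) * (1 - 2 • p) = 1 := by
  have hpp : p * p = p := hp.eq
  simp only [two_smul, sub_mul, mul_sub, add_mul, mul_add, one_mul, mul_one, hpp]
  abel

namespace Matrix

theorem IsHermitian.exists_orthogonal_isDiag {n : Type*} [Fintype n] [DecidableEq n]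
    {S : Matrix n n ℝ} (hS : S.IsHermitian) :
    ∃ O : Matrix n n ℝ, Oᵀ * O = 1 ∧ (Oᵀ * S * O).IsDiag := by
  set U : Matrix n n ℝ := ↑hS.eigenvectorUnitary
  have hU : star U = Uᵀ := by rw [star_eq_conjTranspose, conjTranspose_eq_transpose_of_trivial]
  refine ⟨U, hU ▸ Unitary.coe_star_mul_self _, ?_⟩
  have h := hS.conjStarAlgAut_star_eigenvectorUnitary
  rw [Unitary.conjStarAlgAut_star_apply, hU] at h
  exact h ▸ isDiag_diagonal _

theorem exists_orthogonal_diagonal_mul_eq_mul {m n : Type*} [Fintype m] [Fintype n]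
    [DecidableEq m] [DecidableEq n] {C : Matrix m n ℝ} (hC : (C * Cᵀ).IsDiag)
    {ε : m → ℝ} (hε : ∀ i, ε i = 1 ∨ ε i = -1) :
    ∃ Q : Matrix n n ℝ, Qᵀ * Q = 1 ∧ diagonal ε * C = C * Q := by
  set δ := (C * Cᵀ).diag
  have hδ : diagonal δ = C * Cᵀ := hC.diagonal_diag
  -- `P` is the orthogonal projection onto the span of the rows `C i` with `ε i = -1`;
  -- rows with `δ i = 0` vanish, so the junk value `0⁻¹ = 0` is harmless.
  set w : m → ℝ := fun i => if ε i = -1 then (δ i)⁻¹ else 0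
  set P := Cᵀ * diagonal w * C
  have hPt : Pᵀ = P := by simp [P, transpose_mul, Matrix.mul_assoc]
  have hP : IsIdempotentElem P := by
    have hw : diagonal w * (C * Cᵀ) * diagonal w = diagonal w := by
      rw [← hδ, diagonal_mul_diagonal, diagonal_mul_diagonal]
      congr 1; funext i
      by_cases h : ε i = -1
      · simpa [w, h] using mul_inv_mul_cancel (δ i)⁻¹
      · simp [w, h]
    calc P * P = Cᵀ * (diagonal w * (C * Cᵀ) * diagonal w) * C := by
          simp only [P, Matrix.mul_assoc]
      _ = P := by rw [hw]
  refine ⟨1 - 2 • P, ?_, ?_⟩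
  · rw [transpose_sub, transpose_one, transpose_smul, hPt]
    exact hP.one_sub_two_nsmul_mul_self
  · have hCP : C * P = diagonal δ * diagonal w * C := by
      rw [hδ]; simp only [P, Matrix.mul_assoc]
    rw [Matrix.mul_sub, Matrix.mul_smul, hCP, Matrix.mul_one]
    ext a b
    rcases hε a with h | h
    · norm_num [w, h]
    · by_cases hδa : δ a = 0
      · have hCa : C a = 0 := dotProduct_self_eq_zero.mp hδa
        simp [hCa]
      · have hδw : δ a * w a = 1 := by simp [w, h, hδa]
        simp only [sub_apply, smul_apply, diagonal_mul_diagonal, diagonal_mul, hδw, h]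
        ring

end Matrix

theorem signFlipInvariant_mulVec {Ω : Type*} [MeasurableSpace Ω] {P : Measure Ω}
    {n : Type*} [Fintype n] [DecidableEq n] {d : ℕ} {Y : Ω → n → ℝ}
    (hY : ∀ Q : Matrix n n ℝ, Qᵀ * Q = 1 → IdentDistrib (fun ω => Q *ᵥ Y ω) Y P P)
    {C : Matrix (Fin d) n ℝ} (hC : (C * Cᵀ).IsDiag) :
    SignFlipInvariant P (fun ω => C *ᵥ Y ω) := by
  intro ε hε
  obtain ⟨Q, hQ, hCQ⟩ := exists_orthogonal_diagonal_mul_eq_mul hC hε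
  have hflip : (fun ω i => ε i * (C *ᵥ Y ω) i) = fun ω => C *ᵥ (Q *ᵥ Y ω) := by
    ext ω i
    rw [mulVec_mulVec, ← hCQ, ← mulVec_mulVec, mulVec_diagonal]
  rw [hflip]
  exact (hY Q hQ).comp (by fun_prop : Measurable fun y => C *ᵥ y)

theorem elliptical_satisfies_marden_general
    {Ω : Type*} [MeasurableSpace Ω] (P : Measure Ω)
    (k d : ℕ) (Y : Ω → Fin k → ℝ)
    (hspherical : ∀ Q : Matrix (Fin k) (Fin k) ℝ, Qᵀ * Q = 1 →
      IdentDistrib (fun ω => Q.mulVec (Y ω)) Y P P)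
    (A : Matrix (Fin k) (Fin d) ℝ) (μ : Fin d → ℝ)
    (X : Ω → Fin d → ℝ) (hX : X = fun ω => μ + Aᵀ.mulVec (Y ω)) :
    ∃ (O : Matrix (Fin d) (Fin d) ℝ) (Z : Ω → Fin d → ℝ),
      Oᵀ * O = 1 ∧ SignFlipInvariant P Z ∧
        IdentDistrib X (fun ω => μ + O.mulVec (Z ω)) P P := by
  have hAA : (Aᵀ * A).IsHermitian := by
    simpa using isHermitian_conjTranspose_mul_self A
  obtain ⟨O, hO, hdiag⟩ := hAA.exists_orthogonal_isDiag
  set C := Oᵀ * Aᵀ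
  have hC : (C * Cᵀ).IsDiag := by simpa [C, Matrix.mul_assoc] using hdiag
  have hOC : O * C = Aᵀ := by rw [← Matrix.mul_assoc, mul_eq_one_comm.mp hO, Matrix.one_mul]
  have hYmeas : AEMeasurable Y P := by simpa using (hspherical 1 (by simp)).aemeasurable_fst
  refine ⟨O, fun ω => C *ᵥ Y ω, hO, signFlipInvariant_mulVec hspherical hC, ?_⟩
  simp_rw [hX, mulVec_mulVec, hOC]
  exact IdentDistrib.refl <|
    (by fun_prop : Measurable fun y => μ + Aᵀ *ᵥ y).comp_aemeasurable hYmeas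

/-- finite-dimensional content of FE ⊂ FCS in Proposition 2. If `Y` is
spherically distributed in `ℝ^k` and `X := μ + Aᵀ Y`, then there exist an orthogonal
matrix `O ∈ ℝ^{d×d}` and a sign-flip invariant random vector `Z` such that
`X =_D μ + O Z`; that is, every elliptically distributed random vector satisfies
Marden's model. -/
theorem elliptical_satisfies_marden
    {Ω : Type*} [MeasurableSpace Ω] (P : Measure Ω) [IsProbabilityMeasure P]
    (k d : ℕ) (Y : Ω → Fin k → ℝ)
    (hspherical : ∀ Q : Matrix (Fin k) (Fin k) ℝ, Qᵀ * Q = 1 →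
      IdentDistrib (fun ω => Q.mulVec (Y ω)) Y P P)
    (A : Matrix (Fin k) (Fin d) ℝ) (μ : Fin d → ℝ)
    (X : Ω → Fin d → ℝ) (hX : X = fun ω => μ + Aᵀ.mulVec (Y ω)) :
    ∃ (O : Matrix (Fin d) (Fin d) ℝ) (Z : Ω → Fin d → ℝ),
      Oᵀ * O = 1 ∧ SignFlipInvariant P Z ∧
        IdentDistrib X (fun ω => μ + O.mulVec (Z ω)) P P :=
  elliptical_satisfies_marden_general P k d Y hspherical A μ X hX
end

section
/- Let Q ≥ 1, let λ_1, …, λ_Q be strictly positive real numbers, let U = (U_1, …, U_Q) be a random vector and W a nonnegative real random variable such that for every permutation σ of {1, …, Q} the pair ((U_{σ(1)}, …, U_{σ(Q)}), W) has the same joint distribution as (U, W), and suppose Σ_{i=1}^Q λ_i U_i² + W > 0 almost surely. Define κ*_j := E[λ_j U_j² / (Σ_{i=1}^Q λ_i U_i² + W)]. Then λ_j ≤ λ_k implies κ*_j ≤ κ*_k. (Order-preservation claim of Theorem 3: with measurement error, eigenvalue ordering of the PASS covariance is consistent with that of the covariance.) -/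
open MeasureTheory ProbabilityTheory

lemma pass_aux_algebra (lj lk a b D rest : ℝ) (hlj : 0 < lj) (hlk : 0 < lk) (hjk : lj ≤ lk)
    (ha : 0 ≤ a) (hb : 0 ≤ b) (hrest : 0 ≤ rest)
    (hD : D = lj * a + lk * b + rest)
    (hDpos : 0 < D) (hD'pos : 0 < D - (lk - lj) * (b - a)) :
    0 ≤ (lk * b - lj * a) / D + (lk * a - lj * b) / (D - (lk - lj) * (b - a)) := by
  rw [div_add_div _ _ hDpos.ne' hD'pos.ne']
  apply div_nonneg _ (mul_pos hDpos hD'pos).le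
  subst hD
  nlinarith [mul_nonneg (mul_nonneg (sub_nonneg.2 hjk) (add_nonneg ha hb)) hrest,
    mul_nonneg (mul_nonneg (sub_nonneg.2 hjk) (mul_nonneg ha hb)) (add_pos hlj hlk).le]

lemma pass_aux_swap_sum (Q : ℕ) (lam u : Fin Q → ℝ) (j k : Fin Q) (hjk : j ≠ k) :
    ∑ i, lam i * (u (Equiv.swap j k i)) ^ 2
      = ∑ i, lam i * u i ^ 2 - (lam k - lam j) * (u k ^ 2 - u j ^ 2) := by
  have hsub : ({j, k} : Finset (Fin Q)) ⊆ Finset.univ := Finset.subset_univ _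
  have h1 := Finset.sum_sdiff (f := fun i => lam i * (u (Equiv.swap j k i)) ^ 2) hsub
  have h2 := Finset.sum_sdiff (f := fun i => lam i * u i ^ 2) hsub
  have heq : ∑ i ∈ Finset.univ \ {j, k}, lam i * (u (Equiv.swap j k i)) ^ 2
      = ∑ i ∈ Finset.univ \ {j, k}, lam i * u i ^ 2 := by
    apply Finset.sum_congr rfl
    intro i hi
    simp only [Finset.mem_sdiff, Finset.mem_insert, Finset.mem_singleton] at hi
    rw [Equiv.swap_apply_of_ne_of_ne (by tauto) (by tauto)]
  have hp1 : ∑ i ∈ ({j, k} : Finset (Fin Q)), lam i * (u (Equiv.swap j k i)) ^ 2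
      = lam j * (u k) ^ 2 + lam k * (u j) ^ 2 := by
    rw [Finset.sum_pair hjk, Equiv.swap_apply_left, Equiv.swap_apply_right]
  have hp2 : ∑ i ∈ ({j, k} : Finset (Fin Q)), lam i * u i ^ 2
      = lam j * (u j) ^ 2 + lam k * (u k) ^ 2 := Finset.sum_pair hjk
  linarith [h1, h2, heq, hp1, hp2]

/-- order-preservation claim of Theorem 3, with measurement error. Let
`λ i > 0`, let `(U, W)` be such that for every permutation `σ` the pair
`((U ∘ σ), W)` has the same joint distribution as `(U, W)`, with `W ≥ 0` and
`∑ i, λ i U i² + W > 0` a.s. Then with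
`κ* j := E[λ j U j² / (∑ i, λ i U i² + W)]`, `λ j ≤ λ k` implies `κ* j ≤ κ* k`. -/
theorem pass_noisy_eigenvalue_order_preservation
    {Ω : Type*} [MeasurableSpace Ω] (P : Measure Ω) [IsProbabilityMeasure P]
    (Q : ℕ) (hQ : 1 ≤ Q) (lam : Fin Q → ℝ) (hlam : ∀ i, 0 < lam i)
    (U : Ω → Fin Q → ℝ) (W : Ω → ℝ)
    (hW : ∀ᵐ ω ∂P, 0 ≤ W ω)
    (hexch : ∀ σ : Equiv.Perm (Fin Q),
      IdentDistrib (fun ω => (U ω ∘ σ, W ω)) (fun ω => (U ω, W ω)) P P)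
    (hpos : ∀ᵐ ω ∂P, 0 < (∑ i, lam i * U ω i ^ 2) + W ω)
    (κs : Fin Q → ℝ)
    (hκs : ∀ j, κs j = ∫ ω, lam j * U ω j ^ 2 / ((∑ i, lam i * U ω i ^ 2) + W ω) ∂P) :
    ∀ j k, lam j ≤ lam k → κs j ≤ κs k := by
  intro j k hjk
  rcases eq_or_ne j k with rfl | hne
  · exact le_rfl
  set σ : Equiv.Perm (Fin Q) := Equiv.swap j k with hσ
  set G : (Fin Q → ℝ) × ℝ → ℝ := fun p => (∑ i, lam i * p.1 i ^ 2) + p.2 with hGdef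
  have hGmeas : Measurable G := by
    apply Measurable.add _ measurable_snd
    exact Finset.measurable_sum _ fun i _ =>
      (measurable_const.mul (((measurable_pi_apply i).comp measurable_fst).pow measurable_const))
  -- componentwise functions
  have hFm : ∀ m : Fin Q,
      Measurable (fun p : (Fin Q → ℝ) × ℝ => lam m * p.1 m ^ 2 / G p) := fun m =>
    (measurable_const.mul
      (((measurable_pi_apply m).comp measurable_fst).pow measurable_const)).div hGmeas
  set FΔ : (Fin Q → ℝ) × ℝ → ℝ :=
    fun p => (lam k * p.1 k ^ 2 - lam j * p.1 j ^ 2) / G p with hFΔdef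
  have hFΔmeas : Measurable FΔ :=
    (((measurable_const.mul (((measurable_pi_apply k).comp measurable_fst).pow measurable_const))).sub
      (measurable_const.mul (((measurable_pi_apply j).comp measurable_fst).pow measurable_const))).div hGmeas
  set Y : Ω → (Fin Q → ℝ) × ℝ := fun ω => (U ω, W ω) with hYdef
  set X : Ω → (Fin Q → ℝ) × ℝ := fun ω => (U ω ∘ σ, W ω) with hXdef
  have hY : AEMeasurable Y P := (hexch σ).aemeasurable_snd
  have hX : AEMeasurable X P := (hexch σ).aemeasurable_fst
  -- positivity of the permuted denominator
  have hposY : ∀ᵐ ω ∂P, 0 < G (Y ω) := hpos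
  have hposX : ∀ᵐ ω ∂P, 0 < G (X ω) := by
    have ht : MeasurableSet {p : (Fin Q → ℝ) × ℝ | G p ≤ 0} :=
      measurableSet_le hGmeas measurable_const
    have hmm := (hexch σ).measure_mem_eq ht
    have h0 : P (Y ⁻¹' {p | G p ≤ 0}) = 0 := by
      rw [measure_eq_zero_iff_ae_notMem]
      filter_upwards [hposY] with ω h
      simpa using not_le.2 h
    rw [ae_iff]
    simp only [not_lt]
    exact hmm.trans h0
  -- pointwise bound
  have hbound : ∀ p : (Fin Q → ℝ) × ℝ, 0 ≤ p.2 → 0 < G p →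
      (∀ m : Fin Q, lam m * p.1 m ^ 2 ≤ G p) := by
    intro p hp2 hGp m
    have hs : lam m * p.1 m ^ 2 ≤ ∑ i, lam i * p.1 i ^ 2 :=
      Finset.single_le_sum (f := fun i => lam i * p.1 i ^ 2)
        (fun i _ => mul_nonneg (hlam i).le (sq_nonneg _)) (Finset.mem_univ m)
    simp only [hGdef]; linarith
  have habs : ∀ p : (Fin Q → ℝ) × ℝ, 0 ≤ p.2 → 0 < G p → |FΔ p| ≤ 2 := by
    intro p hp2 hGp
    have h1 := hbound p hp2 hGp k
    have h2 := hbound p hp2 hGp j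
    have h1' : 0 ≤ lam k * p.1 k ^ 2 := mul_nonneg (hlam k).le (sq_nonneg _)
    have h2' : 0 ≤ lam j * p.1 j ^ 2 := mul_nonneg (hlam j).le (sq_nonneg _)
    rw [hFΔdef, abs_div, abs_of_pos hGp, div_le_iff₀ hGp]
    rw [abs_sub_le_iff]
    constructor <;> linarith
  -- W as second coordinate
  have hWY : ∀ᵐ ω ∂P, 0 ≤ (Y ω).2 := hW
  have hWX : ∀ᵐ ω ∂P, 0 ≤ (X ω).2 := hW
  -- integrability
  have hintY : Integrable (fun ω => FΔ (Y ω)) P := by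
    refine Integrable.mono' (integrable_const 2)
      ((hFΔmeas.comp_aemeasurable hY).aestronglyMeasurable) ?_
    filter_upwards [hWY, hposY] with ω h1 h2 using habs _ h1 h2
  have hintX : Integrable (fun ω => FΔ (X ω)) P := by
    refine Integrable.mono' (integrable_const 2)
      ((hFΔmeas.comp_aemeasurable hX).aestronglyMeasurable) ?_
    filter_upwards [hWX, hposX] with ω h1 h2 using habs _ h1 h2
  have hintYm : ∀ m : Fin Q, Integrable (fun ω => lam m * (U ω m) ^ 2 / G (Y ω)) P := by
    intro m
    refine Integrable.mono' (integrable_const 1)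
      (((hFm m).comp_aemeasurable hY).aestronglyMeasurable) ?_
    filter_upwards [hWY, hposY] with ω h1 h2
    have := hbound _ h1 h2 m
    have h0 : 0 ≤ lam m * (U ω m) ^ 2 := mul_nonneg (hlam m).le (sq_nonneg _)
    rw [Real.norm_eq_abs, abs_div, abs_of_pos h2, abs_of_nonneg h0, div_le_one h2]
    exact this
  -- identic distribution of the transformed variables
  have hid : ∫ ω, FΔ (X ω) ∂P = ∫ ω, FΔ (Y ω) ∂P :=
    ((hexch σ).comp hFΔmeas).integral_eq
  -- difference of kappas
  have hdiff : κs k - κs j = ∫ ω, FΔ (Y ω) ∂P := by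
    rw [hκs j, hκs k]
    rw [← integral_sub (hintYm k) (hintYm j)]
    congr 1; funext ω
    simp only [hFΔdef, hGdef, hYdef]
    rw [← sub_div]
  -- nonnegativity of the symmetrized integrand
  have hsum : 0 ≤ ∫ ω, (FΔ (X ω) + FΔ (Y ω)) ∂P := by
    apply integral_nonneg_of_ae
    filter_upwards [hW, hposY, hposX] with ω hw hDY hDX
    have hswap : ∑ i, lam i * (U ω (σ i)) ^ 2
        = (∑ i, lam i * U ω i ^ 2) - (lam k - lam j) * ((U ω k) ^ 2 - (U ω j) ^ 2) :=
      pass_aux_swap_sum Q lam (U ω) j k hne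
    set a := (U ω j) ^ 2
    set b := (U ω k) ^ 2
    set D := (∑ i, lam i * U ω i ^ 2) + W ω with hDdef
    have hGY : G (Y ω) = D := rfl
    have hGX : G (X ω) = D - (lam k - lam j) * (b - a) := by
      simp only [hGdef, hXdef, Function.comp]
      rw [hswap]; ring
    have hXval : FΔ (X ω) = (lam k * a - lam j * b) / (D - (lam k - lam j) * (b - a)) := by
      simp only [hFΔdef]
      rw [hGX]
      congr 2
      · show lam k * (U ω (σ k)) ^ 2 = lam k * a
        rw [hσ, Equiv.swap_apply_right]
      · show lam j * (U ω (σ j)) ^ 2 = lam j * b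
        rw [hσ, Equiv.swap_apply_left]
    have hYval : FΔ (Y ω) = (lam k * b - lam j * a) / D := rfl
    rw [hXval, hYval, add_comm]
    have hDpos : 0 < D := hDY
    have hD'pos : 0 < D - (lam k - lam j) * (b - a) := by rw [← hGX]; exact hDX
    have hpair : lam j * a + lam k * b ≤ ∑ i, lam i * U ω i ^ 2 := by
      have := Finset.sum_le_sum_of_subset_of_nonneg (Finset.subset_univ ({j, k} : Finset (Fin Q)))
        (fun i _ _ => mul_nonneg (hlam i).le (sq_nonneg (U ω i)))
      rwa [Finset.sum_pair hne] at this
    exact pass_aux_algebra (lam j) (lam k) a b D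
      (D - lam j * a - lam k * b) (hlam j) (hlam k) hjk (sq_nonneg _) (sq_nonneg _)
      (by linarith) (by ring) hDpos hD'pos
  rw [integral_add hintX hintY, hid] at hsum
  linarith [hdiff ▸ (by linarith : (0:ℝ) ≤ ∫ ω, FΔ (Y ω) ∂P)]
end

section
/- Let Q ≥ 1 and n ≥ Q, let λ_1 ≥ λ_2 ≥ … ≥ λ_n > 0 be real numbers, and let U = (U_1, …, U_n) be an exchangeable random vector such that Σ_{i=1}^n λ_i U_i² > 0 almost surely. Define κ_j := E[λ_j U_j² / Σ_{i=1}^n λ_i U_i²]. Then Σ_{j=1}^Q κ_j ≤ (Σ_{j=1}^Q λ_j) / (Σ_{i=1}^n λ_i). (Corollary 1, finite probabilistic form: the cumulative proportion of variance measured by the PASS eigenvalues conservatively under-reports the true cumulative proportion of variance explained.) -/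
open MeasureTheory ProbabilityTheory

/-- Auxiliary: the weighted sum `∑ λᵢ uᵢ²`. -/
noncomputable def passS {n : ℕ} (lam : Fin n → ℝ) (u : Fin n → ℝ) : ℝ := ∑ i, lam i * u i ^ 2

/-- Auxiliary: the ratio `λⱼ uⱼ² / ∑ λᵢ uᵢ²`. -/
noncomputable def passG {n : ℕ} (lam : Fin n → ℝ) (j : Fin n) (u : Fin n → ℝ) : ℝ :=
  lam j * u j ^ 2 / passS lam u

lemma passS_measurable {n : ℕ} (lam : Fin n → ℝ) : Measurable (passS lam) :=
  Finset.measurable_sum _ fun i _ =>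
    measurable_const.mul ((measurable_pi_apply i).pow_const 2)

lemma passG_measurable {n : ℕ} (lam : Fin n → ℝ) (j : Fin n) : Measurable (passG lam j) :=
  (measurable_const.mul ((measurable_pi_apply j).pow_const 2)).div (passS_measurable lam)

lemma passS_nonneg {n : ℕ} (lam : Fin n → ℝ) (hlam : ∀ i, 0 < lam i) (u : Fin n → ℝ) :
    0 ≤ passS lam u :=
  Finset.sum_nonneg fun i _ => mul_nonneg (hlam i).le (sq_nonneg _)

lemma passG_nonneg {n : ℕ} (lam : Fin n → ℝ) (hlam : ∀ i, 0 < lam i) (j : Fin n)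
    (u : Fin n → ℝ) : 0 ≤ passG lam j u :=
  div_nonneg (mul_nonneg (hlam j).le (sq_nonneg _)) (passS_nonneg lam hlam u)

lemma passG_le_one {n : ℕ} (lam : Fin n → ℝ) (hlam : ∀ i, 0 < lam i) (j : Fin n)
    (u : Fin n → ℝ) : passG lam j u ≤ 1 := by
  have hle : lam j * u j ^ 2 ≤ passS lam u :=
    Finset.single_le_sum (f := fun i => lam i * u i ^ 2)
      (fun i _ => mul_nonneg (hlam i).le (sq_nonneg _)) (Finset.mem_univ j)
  exact div_le_one_of_le₀ hle (passS_nonneg lam hlam u)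

/-- The key pointwise inequality after swapping coordinates. -/
lemma pass_key_ineq (lj lk a b s t : ℝ) (hlj : 0 < lj) (hlk : 0 < lk) (hjk : lk ≤ lj)
    (hs : 0 < s) (ht : 0 < t) (hts : t - s = (lj - lk) * (b - a)) :
    lk * (lj * a / s) + lk * (lj * b / t) ≤ lj * (lk * b / s) + lj * (lk * a / t) := by
  have e1 : lk * (lj * a / s) + lk * (lj * b / t) = (lk * lj * a * t + lk * lj * b * s) / (s * t) := by
    field_simp
  have e2 : lj * (lk * b / s) + lj * (lk * a / t) = (lj * lk * b * t + lj * lk * a * s) / (s * t) := by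
    field_simp
  rw [e1, e2, div_le_div_iff₀ (by positivity) (by positivity)]
  have hkey : (lj * lk * b * t + lj * lk * a * s) * (s * t)
      - (lk * lj * a * t + lk * lj * b * s) * (s * t)
      = (s * t) * (lj * lk) * ((b - a) * (t - s)) := by ring
  have hnn : 0 ≤ (s * t) * (lj * lk) * ((b - a) * (t - s)) := by
    rw [hts]
    have : (b - a) * ((lj - lk) * (b - a)) = (lj - lk) * (b - a) ^ 2 := by ring
    rw [this]
    have h1 : 0 ≤ (lj - lk) * (b - a) ^ 2 :=
      mul_nonneg (by linarith) (sq_nonneg _)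
    positivity
  linarith

/-- The rearrangement step: if `κ/λ` is increasing (in the cross-product sense) then the
partial `κ`-sum times total `λ`-sum is at most partial `λ`-sum times total `κ`-sum. -/
lemma pass_aux_sum {n Q : ℕ} (hQn : Q ≤ n) (lam κ : Fin n → ℝ)
    (hm : ∀ j k : Fin n, j ≤ k → lam k * κ j ≤ lam j * κ k) :
    (∑ j : Fin Q, κ (Fin.castLE hQn j)) * (∑ i, lam i) ≤
      (∑ j : Fin Q, lam (Fin.castLE hQn j)) * (∑ i, κ i) := by
  classical
  set F : Finset (Fin n) := Finset.univ.filter (fun i : Fin n => (i : ℕ) < Q) with hF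
  have himg : ∀ f : Fin n → ℝ, ∑ j : Fin Q, f (Fin.castLE hQn j) = ∑ i ∈ F, f i := by
    intro f
    have hinj : ∀ x ∈ (Finset.univ : Finset (Fin Q)), ∀ y ∈ Finset.univ,
        Fin.castLE hQn x = Fin.castLE hQn y → x = y :=
      fun x _ y _ h => Fin.castLE_injective hQn h
    rw [← Finset.sum_image (f := f) (g := Fin.castLE hQn) hinj]
    congr 1
    ext i
    simp only [Finset.mem_image, Finset.mem_univ, true_and, hF, Finset.mem_filter]
    constructor
    · rintro ⟨j, rfl⟩; exact j.isLt
    · intro h; exact ⟨⟨(i : ℕ), h⟩, Fin.ext rfl⟩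
  rw [himg, himg]
  have hsplitL : ∑ i, lam i = ∑ i ∈ F, lam i + ∑ i ∈ Finset.univ.filter (fun i : Fin n => ¬ (i : ℕ) < Q), lam i := by
    rw [hF]; exact (Finset.sum_filter_add_sum_filter_not _ _ _).symm
  have hsplitK : ∑ i, κ i = ∑ i ∈ F, κ i + ∑ i ∈ Finset.univ.filter (fun i : Fin n => ¬ (i : ℕ) < Q), κ i := by
    rw [hF]; exact (Finset.sum_filter_add_sum_filter_not _ _ _).symm
  rw [hsplitL, hsplitK]
  have key : (∑ j ∈ F, κ j) * (∑ i ∈ Finset.univ.filter (fun i : Fin n => ¬ (i : ℕ) < Q), lam i) ≤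
      (∑ j ∈ F, lam j) * (∑ i ∈ Finset.univ.filter (fun i : Fin n => ¬ (i : ℕ) < Q), κ i) := by
    rw [Finset.sum_mul_sum, Finset.sum_mul_sum]
    refine Finset.sum_le_sum fun j hj => Finset.sum_le_sum fun i hi => ?_
    have hjF : (j : ℕ) < Q := by simp only [hF, Finset.mem_filter] at hj; exact hj.2
    have hiF : ¬ (i : ℕ) < Q := by simp only [Finset.mem_filter] at hi; exact hi.2
    have hji : j ≤ i := by
      rw [Fin.le_def]; omega
    have := hm j i hji
    nlinarith [this]
  nlinarith [key]

/-- Corollary 1, finite probabilistic form. Let `Q ≤ n`, let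
`λ 1 ≥ λ 2 ≥ … ≥ λ n > 0`, and let `U` be an exchangeable random vector in `ℝ^n` with
`∑ i, λ i U i² > 0` a.s. Then with `κ j := E[λ j U j² / ∑ i, λ i U i²]`, the cumulative
proportion of variance measured by the PASS eigenvalues conservatively under-reports the
true cumulative proportion of variance explained:
`∑_{j<Q} κ j ≤ (∑_{j<Q} λ j) / (∑ i, λ i)`. -/
theorem pass_cumulative_variance_conservative
    {Ω : Type*} [MeasurableSpace Ω] (P : Measure Ω) [IsProbabilityMeasure P]
    (n Q : ℕ) (hQ : 1 ≤ Q) (hQn : Q ≤ n)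
    (lam : Fin n → ℝ) (hlam : ∀ i, 0 < lam i)
    (hmono : ∀ i j : Fin n, i ≤ j → lam j ≤ lam i)
    (U : Ω → Fin n → ℝ)
    (hexch : ∀ σ : Equiv.Perm (Fin n),
      IdentDistrib (fun ω => U ω ∘ σ) U P P)
    (hpos : ∀ᵐ ω ∂P, 0 < ∑ i, lam i * U ω i ^ 2)
    (κ : Fin n → ℝ)
    (hκ : ∀ j, κ j = ∫ ω, lam j * U ω j ^ 2 / ∑ i, lam i * U ω i ^ 2 ∂P) :
    ∑ j : Fin Q, κ (Fin.castLE hQn j) ≤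
      (∑ j : Fin Q, lam (Fin.castLE hQn j)) / ∑ i, lam i := by
  classical
  have hκg : ∀ j, κ j = ∫ ω, passG lam j (U ω) ∂P := hκ
  have hposS : ∀ᵐ ω ∂P, 0 < passS lam (U ω) := hpos
  have hUmeas : AEMeasurable U P := (hexch 1).aemeasurable_snd
  -- integrability of passG composed with any random vector
  have hInt : ∀ (V : Ω → Fin n → ℝ), AEMeasurable V P → ∀ j,
      Integrable (fun ω => passG lam j (V ω)) P := by
    intro V hV j
    have hm : AEStronglyMeasurable (fun ω => passG lam j (V ω)) P :=
      ((passG_measurable lam j).comp_aemeasurable hV).aestronglyMeasurable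
    refine (integrable_const (1 : ℝ)).mono' hm ?_
    filter_upwards with ω
    rw [Real.norm_eq_abs, abs_of_nonneg (passG_nonneg lam hlam j _)]
    exact passG_le_one lam hlam j _
  -- nonnegativity of κ
  have hκ0 : ∀ i, 0 ≤ κ i := by
    intro i
    rw [hκg i]
    exact integral_nonneg fun ω => passG_nonneg lam hlam i _
  -- sum of κ equals 1
  have hsum1 : ∑ i, κ i = 1 := by
    have hae : ∀ᵐ ω ∂P, ∑ i, passG lam i (U ω) = 1 := by
      filter_upwards [hposS] with ω h
      simp only [passG]
      have hnum : (∑ i, lam i * U ω i ^ 2) = passS lam (U ω) := rfl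
      rw [← Finset.sum_div, hnum, div_self h.ne']
    calc ∑ i, κ i = ∑ i, ∫ ω, passG lam i (U ω) ∂P :=
          Finset.sum_congr rfl fun i _ => hκg i
      _ = ∫ ω, ∑ i, passG lam i (U ω) ∂P :=
          (integral_finset_sum _ fun i _ => hInt U hUmeas i).symm
      _ = ∫ _ω, (1 : ℝ) ∂P := integral_congr_ae hae
      _ = 1 := by simp
  -- monotonicity: κ/λ is increasing
  have hmonoκ : ∀ j k : Fin n, j ≤ k → lam k * κ j ≤ lam j * κ k := by
    intro j k hjk
    rcases eq_or_ne j k with rfl | hne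
    · exact le_of_eq (by ring)
    · set σ : Equiv.Perm (Fin n) := Equiv.swap j k with hσ
      have hid := hexch σ
      have hUσ : AEMeasurable (fun ω => U ω ∘ σ) P := hid.aemeasurable_fst
      -- the swapped weighted sum relation
      have hTS : ∀ u : Fin n → ℝ,
          passS lam (u ∘ σ) - passS lam u = (lam j - lam k) * (u k ^ 2 - u j ^ 2) := by
        intro u
        simp only [passS]
        rw [← Finset.sum_sub_distrib]
        have hterm : ∀ i : Fin n, lam i * (u ∘ σ) i ^ 2 - lam i * u i ^ 2 =
            (if i = j then lam j * (u k ^ 2 - u j ^ 2) else 0)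
              + (if i = k then lam k * (u j ^ 2 - u k ^ 2) else 0) := by
          intro i
          by_cases h1 : i = j
          · subst h1
            rw [if_pos rfl, if_neg hne]
            simp only [Function.comp_apply, hσ, Equiv.swap_apply_left]
            ring
          · by_cases h2 : i = k
            · subst h2
              rw [if_neg h1, if_pos rfl]
              simp only [Function.comp_apply, hσ, Equiv.swap_apply_right]
              ring
            · rw [if_neg h1, if_neg h2]
              simp only [Function.comp_apply, hσ,
                Equiv.swap_apply_of_ne_of_ne h1 h2, add_zero, sub_self]
        rw [Finset.sum_congr rfl fun i _ => hterm i, Finset.sum_add_distrib]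
        rw [Finset.sum_ite_eq' Finset.univ j fun _ => lam j * (u k ^ 2 - u j ^ 2),
          Finset.sum_ite_eq' Finset.univ k fun _ => lam k * (u j ^ 2 - u k ^ 2)]
        simp only [Finset.mem_univ, if_pos]
        ring
      -- positivity of the swapped sum
      have hposT : ∀ᵐ ω ∂P, 0 < passS lam (U ω ∘ σ) := by
        have pmeas : MeasurableSet {u : Fin n → ℝ | 0 < passS lam u} :=
          passS_measurable lam measurableSet_Ioi
        exact hid.symm.ae_snd (p := fun u => 0 < passS lam u) pmeas hposS
      -- equality of integrals under the swap
      have hswap : ∀ m : Fin n, ∫ ω, passG lam m (U ω ∘ σ) ∂P = κ m := by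
        intro m
        rw [hκg m]
        exact (hid.comp (passG_measurable lam m)).integral_eq
      -- the pointwise a.e. inequality
      have hae : ∀ᵐ ω ∂P,
          lam k * passG lam j (U ω) + lam k * passG lam j (U ω ∘ σ) ≤
            lam j * passG lam k (U ω) + lam j * passG lam k (U ω ∘ σ) := by
        filter_upwards [hposS, hposT] with ω h1 h2
        have e1 : passG lam j (U ω ∘ σ) = lam j * (U ω k) ^ 2 / passS lam (U ω ∘ σ) := by
          simp only [passG, Function.comp_apply, hσ, Equiv.swap_apply_left]
        have e2 : passG lam k (U ω ∘ σ) = lam k * (U ω j) ^ 2 / passS lam (U ω ∘ σ) := by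
          simp only [passG, Function.comp_apply, hσ, Equiv.swap_apply_right]
        rw [e1, e2]
        simp only [passG]
        exact pass_key_ineq (lam j) (lam k) (U ω j ^ 2) (U ω k ^ 2) _ _
          (hlam j) (hlam k) (hmono j k hjk) h1 h2 (hTS (U ω))
      have hintL : Integrable
          (fun ω => lam k * passG lam j (U ω) + lam k * passG lam j (U ω ∘ σ)) P :=
        ((hInt U hUmeas j).const_mul _).add ((hInt _ hUσ j).const_mul _)
      have hintR : Integrable
          (fun ω => lam j * passG lam k (U ω) + lam j * passG lam k (U ω ∘ σ)) P :=
        ((hInt U hUmeas k).const_mul _).add ((hInt _ hUσ k).const_mul _)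
      have hint := integral_mono_ae hintL hintR hae
      rw [integral_add ((hInt U hUmeas j).const_mul _) ((hInt _ hUσ j).const_mul _),
        integral_add ((hInt U hUmeas k).const_mul _) ((hInt _ hUσ k).const_mul _),
        integral_const_mul, integral_const_mul, integral_const_mul, integral_const_mul,
        hswap j, hswap k, ← hκg j, ← hκg k] at hint
      linarith
  -- conclude
  have hn : 0 < n := lt_of_lt_of_le hQ hQn
  have hlamsum : 0 < ∑ i, lam i :=
    Finset.sum_pos (fun i _ => hlam i) ⟨(⟨0, hn⟩ : Fin n), Finset.mem_univ _⟩
  rw [le_div_iff₀ hlamsum]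
  calc (∑ j : Fin Q, κ (Fin.castLE hQn j)) * (∑ i, lam i)
      ≤ (∑ j : Fin Q, lam (Fin.castLE hQn j)) * (∑ i, κ i) :=
        pass_aux_sum hQn lam κ hmonoκ
    _ = ∑ j : Fin Q, lam (Fin.castLE hQn j) := by rw [hsum1, mul_one]
end
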